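/- arXiv:1507.03113 — 14 statements merged into one kernel-verified Lean document; each statement's English description precedes it below -/
import Mathlib

section
/- Let k be a positive integer, ε₁,…,ε_k ≥ 0 real, δ₁,…,δ_k, δ_g ∈ [0,1), and ε_g ≥ 0. Suppose (1/∏_{i=1}^k (1+exp(ε_i))) · Σ_{S ⊆ {1,…,k}} max(exp(Σ_{i∈S} ε_i) − exp(ε_g)·exp(Σ_{i∉S} ε_i), 0) ≤ 1 − (1−δ_g)/∏_{i=1}^k (1−δ_i). Then for every family of finite types R₁,…,R_k and every family of pairs of probability mass functions P_i⁰, P_i¹ on R_i such that P_i⁰ and P_i¹ are (ε_i,δ_i)-indistinguishable for each i, the product distributions ⊗_{i=1}^k P_i⁰ and ⊗_{i=1}^k P_i¹ on R₁×…×R_k are (ε_g,δ_g)-indistinguishable. -/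
/-!
Each pair `(P₀, P₁)` of `(ε, δ)`-indistinguishable distributions dominates, up to the factor
`1 - δ`, a pair of distributions whose likelihood ratio lies in `[e^{-ε}, e^{ε}]`; hence the product
distributions dominate, up to the factor `∏ (1 - δᵢ)`, a product of such pure pairs. A pure pair is
the image of randomized response `((e^ε, 1), (1, e^ε)) / (1 + e^ε)` under a common kernel, so for
products the hockey-stick divergence `∑ (P - e^{ε_g} Q)⁺` is at most that of the products of
randomized responses, which is the left-hand side of the hypothesis. Adding back the missing mass
`1 - ∏ (1 - δᵢ)` gives `δ_g`.
-/

open Finset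

/-- A probability mass function on a finite type: nonnegative and summing to 1. -/
def IsPMF {R : Type*} [Fintype R] (P : R → ℝ) : Prop :=
  (∀ r, 0 ≤ P r) ∧ ∑ r, P r = 1

/-- Two distributions are `(ε, δ)`-indistinguishable if for every subset `S`,
`P₀(S) ≤ exp ε · P₁(S) + δ` and `P₁(S) ≤ exp ε · P₀(S) + δ`. -/
def Indist {R : Type*} [Fintype R] (ε δ : ℝ) (P0 P1 : R → ℝ) : Prop :=
  ∀ S : Finset R,
    (∑ r ∈ S, P0 r ≤ Real.exp ε * ∑ r ∈ S, P1 r + δ) ∧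
    (∑ r ∈ S, P1 r ≤ Real.exp ε * ∑ r ∈ S, P0 r + δ)

open Real

def hockeyStick {R : Type*} [Fintype R] (c : ℝ) (P Q : R → ℝ) : ℝ :=
  ∑ r, max (P r - c * Q r) 0

def PureIndist {R : Type*} (ε : ℝ) (P Q : R → ℝ) : Prop :=
  ∀ r, P r ≤ exp ε * Q r ∧ Q r ≤ exp ε * P r

lemma PureIndist.symm {R : Type*} {ε : ℝ} {P Q : R → ℝ} (h : PureIndist ε P Q) :
    PureIndist ε Q P :=
  fun r => (h r).symm

lemma IsPMF.pi {ι : Type*} [Fintype ι] [DecidableEq ι] {R : ι → Type*} [∀ i, Fintype (R i)]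
    {P : ∀ i, R i → ℝ} (h : ∀ i, IsPMF (P i)) : IsPMF fun r : ∀ i, R i => ∏ i, P i (r i) :=
  ⟨fun r => prod_nonneg fun i _ => (h i).1 _, by
    rw [← Fintype.prod_sum]; exact prod_eq_one fun i _ => (h i).2⟩

section HockeyStick

variable {R : Type*} [Fintype R]

lemma forall_sum_le_iff_hockeyStick_le {c δ : ℝ} {P Q : R → ℝ} :
    (∀ S : Finset R, ∑ r ∈ S, P r ≤ c * ∑ r ∈ S, Q r + δ) ↔ hockeyStick c P Q ≤ δ := by
  classical
  constructor
  · intro h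
    set S := univ.filter fun r => 0 < P r - c * Q r
    have hS : hockeyStick c P Q = ∑ r ∈ S, (P r - c * Q r) := by
      rw [sum_filter]
      refine sum_congr rfl fun r _ => ?_
      split_ifs with hr
      exacts [max_eq_left hr.le, max_eq_right (not_lt.1 hr)]
    rw [hS, sum_sub_distrib, ← mul_sum]
    linarith [h S]
  · intro h S
    have : ∑ r ∈ S, (P r - c * Q r) ≤ hockeyStick c P Q :=
      (sum_le_sum fun r _ => le_max_left _ 0).trans
        (sum_le_univ_sum_of_nonneg fun _ => le_max_right _ _)
    rw [sum_sub_distrib, ← mul_sum] at this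
    linarith

lemma indist_iff_hockeyStick_le {ε δ : ℝ} {P Q : R → ℝ} :
    Indist ε δ P Q ↔ hockeyStick (exp ε) P Q ≤ δ ∧ hockeyStick (exp ε) Q P ≤ δ := by
  simp only [Indist, forall_and, forall_sum_le_iff_hockeyStick_le]

lemma hockeyStick_le_of_mul_le {c D : ℝ} (hc : 0 ≤ c) (hD : 0 ≤ D) {P Q P' Q' : R → ℝ}
    (hP : IsPMF P) (hP' : IsPMF P') (hPP' : ∀ r, D * P' r ≤ P r) (hQQ' : ∀ r, D * Q' r ≤ Q r) :
    hockeyStick c P Q ≤ D * hockeyStick c P' Q' + (1 - D) := by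
  have key : ∀ r, max (P r - c * Q r) 0 ≤ (P r - D * P' r) + D * max (P' r - c * Q' r) 0 := by
    intro r
    have hQ := mul_le_mul_of_nonneg_left (hQQ' r) hc
    refine max_le ?_ (add_nonneg (sub_nonneg.2 (hPP' r)) (mul_nonneg hD (le_max_right _ _)))
    nlinarith [mul_le_mul_of_nonneg_left (le_max_left (P' r - c * Q' r) 0) hD]
  calc hockeyStick c P Q ≤ ∑ r, ((P r - D * P' r) + D * max (P' r - c * Q' r) 0) :=
        sum_le_sum fun r _ => key r
    _ = D * hockeyStick c P' Q' + (1 - D) := by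
        rw [hockeyStick, sum_add_distrib, sum_sub_distrib, ← mul_sum, ← mul_sum, hP.2, hP'.2]
        ring

lemma sum_min_eq_sub_hockeyStick (c : ℝ) (P Q : R → ℝ) :
    ∑ r, min (P r) (c * Q r) = ∑ r, P r - hockeyStick c P Q := by
  rw [hockeyStick, ← sum_sub_distrib]
  refine sum_congr rfl fun r _ => ?_
  rcases le_total (P r) (c * Q r) with h | h
  · rw [min_eq_left h, max_eq_right (sub_nonpos.2 h), sub_zero]
  · rw [min_eq_right h, max_eq_left (sub_nonneg.2 h), sub_sub_cancel]

end HockeyStick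

section Decomposition

variable {R : Type*} [Fintype R]

lemma exists_le_le_sum_eq {L U : R → ℝ} (hLU : ∀ r, L r ≤ U r) {s : ℝ}
    (hL : ∑ r, L r ≤ s) (hU : s ≤ ∑ r, U r) :
    ∃ y : R → ℝ, (∀ r, L r ≤ y r) ∧ (∀ r, y r ≤ U r) ∧ ∑ r, y r = s := by
  have hcont : ContinuousOn (fun t : ℝ => ∑ r, (L r + t * (U r - L r))) (Set.Icc 0 1) := by
    fun_prop
  obtain ⟨t, ⟨ht0, ht1⟩, hts⟩ :=
    intermediate_value_Icc zero_le_one hcont ⟨by simpa using hL, by simpa using hU⟩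
  refine ⟨fun r => L r + t * (U r - L r), fun r => ?_, fun r => ?_, hts⟩
  · nlinarith [hLU r]
  · nlinarith [hLU r]

lemma exists_pureIndist_le_of_hockeyStick_le {ε : ℝ} (hε : 0 ≤ ε) {P Q : R → ℝ}
    (hP : IsPMF P) (hQ : IsPMF Q) (hQP : hockeyStick (exp ε) Q P ≤ hockeyStick (exp ε) P Q) :
    ∃ x y : R → ℝ, (∀ r, 0 ≤ x r) ∧ (∀ r, x r ≤ P r) ∧ (∀ r, y r ≤ Q r) ∧
      PureIndist ε x y ∧ ∑ r, x r = 1 - hockeyStick (exp ε) P Q ∧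
      ∑ r, y r = 1 - hockeyStick (exp ε) P Q := by
  set e := exp ε
  have he : 1 ≤ e := one_le_exp hε
  have he0 : 0 < e := exp_pos ε
  set x := fun r => min (P r) (e * Q r)
  set U := fun r => min (Q r) (e * P r)
  have hx0 : ∀ r, 0 ≤ x r := fun r => le_min (hP.1 r) (mul_nonneg he0.le (hQ.1 r))
  have hxsum : ∑ r, x r = 1 - hockeyStick e P Q := by
    rw [sum_min_eq_sub_hockeyStick, hP.2]
  have hUsum : ∑ r, U r = 1 - hockeyStick e Q P := by
    rw [sum_min_eq_sub_hockeyStick, hQ.2]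
  have hLU : ∀ r, x r / e ≤ U r := fun r => by
    refine le_min (div_le_of_le_mul₀ he0.le (hQ.1 r) ?_)
      (div_le_of_le_mul₀ he0.le (mul_nonneg he0.le (hP.1 r)) ?_)
    · rw [mul_comm]; exact min_le_right _ _
    · have hxP : x r ≤ P r := min_le_left _ _
      nlinarith [hP.1 r, mul_le_mul he he zero_le_one he0.le]
  have hLsum : ∑ r, x r / e ≤ 1 - hockeyStick e P Q := by
    rw [← sum_div, hxsum]
    exact div_le_self (hxsum ▸ sum_nonneg fun r _ => hx0 r) he
  -- `y` can be given the mass of `x` because `Q` has no more excess over `e P` than `P` over `e Q`.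
  obtain ⟨y, hxy, hyU, hysum⟩ := exists_le_le_sum_eq hLU hLsum (by rw [hUsum]; linarith)
  refine ⟨x, y, hx0, fun r => min_le_left _ _, fun r => (hyU r).trans (min_le_left _ _),
    fun r => ⟨?_, (hyU r).trans ?_⟩, hxsum, hysum⟩
  · have := hxy r
    rwa [div_le_iff₀ he0, mul_comm] at this
  · rw [mul_min_of_nonneg _ _ he0.le]
    refine le_min (min_le_right _ _) ((min_le_left _ _).trans ?_)
    nlinarith [hQ.1 r, mul_le_mul he he zero_le_one he0.le]

lemma exists_isPMF_of_pureIndist_le {ε δ : ℝ} {P Q x y : R → ℝ} (hx : ∀ r, 0 ≤ x r)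
    (hxP : ∀ r, x r ≤ P r) (hyQ : ∀ r, y r ≤ Q r) (hxy : PureIndist ε x y)
    (hsum : ∑ r, x r = ∑ r, y r) (hδ : δ < 1) (hmass : 1 - δ ≤ ∑ r, x r) :
    ∃ P' Q' : R → ℝ, IsPMF P' ∧ IsPMF Q' ∧ PureIndist ε P' Q' ∧
      (∀ r, (1 - δ) * P' r ≤ P r) ∧ (∀ r, (1 - δ) * Q' r ≤ Q r) := by
  set m := ∑ r, x r
  have hm : 0 < m := by linarith
  have hy : ∀ r, 0 ≤ y r := fun r =>
    nonneg_of_mul_nonneg_right ((hx r).trans (hxy r).1) (exp_pos ε)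
  have hscale : ∀ {z : R → ℝ} {w : R → ℝ}, (∀ r, 0 ≤ z r) → (∀ r, z r ≤ w r) →
      ∀ r, (1 - δ) * (z r / m) ≤ w r := fun hz hzw r => by
    rw [mul_div_left_comm, mul_comm]
    exact (mul_le_of_le_one_left (hz r) ((div_le_one hm).2 hmass)).trans (hzw r)
  refine ⟨fun r => x r / m, fun r => y r / m, ⟨fun r => div_nonneg (hx r) hm.le, ?_⟩,
    ⟨fun r => div_nonneg (hy r) hm.le, ?_⟩, fun r => ⟨?_, ?_⟩, hscale hx hxP, hscale hy hyQ⟩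
  · rw [← sum_div, div_self hm.ne']
  · rw [← sum_div, ← hsum, div_self hm.ne']
  · rw [← mul_div_assoc]; exact div_le_div_of_nonneg_right (hxy r).1 hm.le
  · rw [← mul_div_assoc]; exact div_le_div_of_nonneg_right (hxy r).2 hm.le

lemma Indist.exists_pureIndist {ε δ : ℝ} (hε : 0 ≤ ε) (hδ : δ < 1) {P Q : R → ℝ}
    (hP : IsPMF P) (hQ : IsPMF Q) (h : Indist ε δ P Q) :
    ∃ P' Q' : R → ℝ, IsPMF P' ∧ IsPMF Q' ∧ PureIndist ε P' Q' ∧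
      (∀ r, (1 - δ) * P' r ≤ P r) ∧ (∀ r, (1 - δ) * Q' r ≤ Q r) := by
  rw [indist_iff_hockeyStick_le] at h
  wlog hQP : hockeyStick (exp ε) Q P ≤ hockeyStick (exp ε) P Q generalizing P Q
  · obtain ⟨Q', P', hQ', hP', hpure, hQQ', hPP'⟩ := this hQ hP h.symm (le_of_not_ge hQP)
    exact ⟨P', Q', hP', hQ', hpure.symm, hPP', hQQ'⟩
  obtain ⟨x, y, hx, hxP, hyQ, hxy, hxsum, hysum⟩ :=
    exists_pureIndist_le_of_hockeyStick_le hε hP hQ hQP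
  exact exists_isPMF_of_pureIndist_le hx hxP hyQ hxy (hxsum.trans hysum.symm) hδ
    (by rw [hxsum]; linarith [h.1])

/-- With `e = exp ε`, `(P, Q)` is the image of randomized response `((e, 1), (1, e)) / (1 + e)`
under the kernel `(1 + e) • (a, b)`. -/
lemma PureIndist.exists_randomizedResponse_decomp {ε : ℝ} (hε : 0 ≤ ε) {P Q : R → ℝ}
    (hP : IsPMF P) (hQ : IsPMF Q) (h : PureIndist ε P Q) :
    ∃ a b : R → ℝ, (∀ r, 0 ≤ a r) ∧ (∀ r, 0 ≤ b r) ∧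
      (∀ r, P r = exp ε * a r + b r) ∧ (∀ r, Q r = a r + exp ε * b r) ∧
      ∑ r, a r = 1 / (1 + exp ε) ∧ ∑ r, b r = 1 / (1 + exp ε) := by
  rcases hε.eq_or_lt with rfl | hpos
  · have hPQ : ∀ r, P r = Q r := fun r => le_antisymm_iff.2 (by simpa using h r)
    refine ⟨fun r => P r / 2, fun r => P r / 2, fun r => by linarith [hP.1 r],
      fun r => by linarith [hP.1 r], fun r => ?_, fun r => ?_, ?_, ?_⟩ <;>
    simp only [exp_zero, ← hPQ, ← sum_div, hP.2] <;> ring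
  · set e := exp ε
    have he : 0 < e ^ 2 - 1 := by nlinarith [one_lt_exp_iff.2 hpos]
    refine ⟨fun r => (e * P r - Q r) / (e ^ 2 - 1), fun r => (e * Q r - P r) / (e ^ 2 - 1),
      fun r => div_nonneg (sub_nonneg.2 (h r).2) he.le,
      fun r => div_nonneg (sub_nonneg.2 (h r).1) he.le, fun r => ?_, fun r => ?_, ?_, ?_⟩
    · field_simp; ring
    · field_simp; ring
    · rw [← sum_div, sum_sub_distrib, ← mul_sum, hP.2, hQ.2,
        div_eq_div_iff he.ne' (by positivity)]
      ring
    · rw [← sum_div, sum_sub_distrib, ← mul_sum, hP.2, hQ.2,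
        div_eq_div_iff he.ne' (by positivity)]
      ring

end Decomposition

section Product

variable {ι : Type*} [Fintype ι] [DecidableEq ι]

lemma max_prod_sub_mul_prod_le (e x y : ι → ℝ) (hx : ∀ i, 0 ≤ x i) (hy : ∀ i, 0 ≤ y i) (c : ℝ) :
    max (∏ i, (e i * x i + y i) - c * ∏ i, (x i + e i * y i)) 0 ≤
      ∑ T : Finset ι, (∏ i ∈ T, x i) * (∏ i ∈ Tᶜ, y i) *
        max (∏ i ∈ T, e i - c * ∏ i ∈ Tᶜ, e i) 0 := by
  have hw : ∀ T : Finset ι, 0 ≤ (∏ i ∈ T, x i) * ∏ i ∈ Tᶜ, y i := fun T =>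
    mul_nonneg (prod_nonneg fun i _ => hx i) (prod_nonneg fun i _ => hy i)
  refine max_le ?_ (sum_nonneg fun T _ => mul_nonneg (hw T) (le_max_right _ _))
  calc ∏ i, (e i * x i + y i) - c * ∏ i, (x i + e i * y i)
      = ∑ T : Finset ι, (∏ i ∈ T, x i) * (∏ i ∈ Tᶜ, y i) *
          (∏ i ∈ T, e i - c * ∏ i ∈ Tᶜ, e i) := by
        rw [Fintype.prod_add, Fintype.prod_add, mul_sum, ← sum_sub_distrib]
        refine sum_congr rfl fun T _ => ?_
        rw [prod_mul_distrib, prod_mul_distrib]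
        ring
    _ ≤ _ := sum_le_sum fun T _ => mul_le_mul_of_nonneg_left (le_max_left _ _) (hw T)

variable {R : ι → Type*} [∀ i, Fintype (R i)]

lemma sum_pi_prod_mul_prod_compl (T : Finset ι) (a b : ∀ i, R i → ℝ) :
    ∑ r : ∀ i, R i, (∏ i ∈ T, a i (r i)) * ∏ i ∈ Tᶜ, b i (r i) =
      (∏ i ∈ T, ∑ x, a i x) * ∏ i ∈ Tᶜ, ∑ x, b i x := by
  have hsplit : ∀ f g : ι → ℝ,
      ∏ i, (if i ∈ T then f i else g i) = (∏ i ∈ T, f i) * ∏ i ∈ Tᶜ, g i := fun f g => by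
    rw [prod_ite]; simp [filter_not, compl_eq_univ_sdiff]
  calc ∑ r : ∀ i, R i, (∏ i ∈ T, a i (r i)) * ∏ i ∈ Tᶜ, b i (r i)
      = ∑ r : ∀ i, R i, ∏ i, (if i ∈ T then a i (r i) else b i (r i)) := by simp only [hsplit]
    _ = ∏ i, ∑ x, (if i ∈ T then a i x else b i x) :=
        (Fintype.prod_sum fun i x => if i ∈ T then a i x else b i x).symm
    _ = ∏ i, (if i ∈ T then ∑ x, a i x else ∑ x, b i x) :=
        prod_congr rfl fun i _ => by split_ifs <;> rfl
    _ = _ := hsplit _ _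

lemma hockeyStick_pi_le_of_pureIndist {ε : ι → ℝ} (hε : ∀ i, 0 ≤ ε i) {P Q : ∀ i, R i → ℝ}
    (hP : ∀ i, IsPMF (P i)) (hQ : ∀ i, IsPMF (Q i)) (h : ∀ i, PureIndist (ε i) (P i) (Q i))
    (c : ℝ) :
    hockeyStick c (fun r : ∀ i, R i => ∏ i, P i (r i)) (fun r => ∏ i, Q i (r i)) ≤
      (1 / ∏ i, (1 + exp (ε i))) *
        ∑ T : Finset ι, max (exp (∑ i ∈ T, ε i) - c * exp (∑ i ∈ Tᶜ, ε i)) 0 := by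
  choose a b ha hb hPab hQab hsa hsb using
    fun i => (h i).exists_randomizedResponse_decomp (hε i) (hP i) (hQ i)
  calc hockeyStick c (fun r : ∀ i, R i => ∏ i, P i (r i)) (fun r => ∏ i, Q i (r i))
      ≤ ∑ r : ∀ i, R i, ∑ T : Finset ι, (∏ i ∈ T, a i (r i)) * (∏ i ∈ Tᶜ, b i (r i)) *
          max (∏ i ∈ T, exp (ε i) - c * ∏ i ∈ Tᶜ, exp (ε i)) 0 := by
        refine sum_le_sum fun r _ => ?_
        simp only [hPab, hQab]
        exact max_prod_sub_mul_prod_le _ _ _ (fun i => ha i _) (fun i => hb i _) c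
    _ = ∑ T : Finset ι, (1 / ∏ i, (1 + exp (ε i))) *
          max (∏ i ∈ T, exp (ε i) - c * ∏ i ∈ Tᶜ, exp (ε i)) 0 := by
        rw [sum_comm]
        refine sum_congr rfl fun T _ => ?_
        rw [← sum_mul, sum_pi_prod_mul_prod_compl, prod_congr rfl fun i _ => hsa i,
          prod_congr rfl fun i _ => hsb i, prod_mul_prod_compl, prod_div_distrib, prod_const_one]
    _ = _ := by simp only [← mul_sum, exp_sum]

lemma hockeyStick_pi_le_of_approx {ε δ : ι → ℝ} (hε : ∀ i, 0 ≤ ε i) (hδ : ∀ i, δ i < 1)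
    {P Q P' Q' : ∀ i, R i → ℝ} (hP : ∀ i, IsPMF (P i)) (hP' : ∀ i, IsPMF (P' i))
    (hQ' : ∀ i, IsPMF (Q' i)) (hpure : ∀ i, PureIndist (ε i) (P' i) (Q' i))
    (hPP' : ∀ i r, (1 - δ i) * P' i r ≤ P i r) (hQQ' : ∀ i r, (1 - δ i) * Q' i r ≤ Q i r)
    {c : ℝ} (hc : 0 ≤ c) :
    hockeyStick c (fun r : ∀ i, R i => ∏ i, P i (r i)) (fun r => ∏ i, Q i (r i)) ≤
      (∏ i, (1 - δ i)) * ((1 / ∏ i, (1 + exp (ε i))) *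
        ∑ T : Finset ι, max (exp (∑ i ∈ T, ε i) - c * exp (∑ i ∈ Tᶜ, ε i)) 0) +
      (1 - ∏ i, (1 - δ i)) := by
  have hprod : ∀ {F F' : ∀ i, R i → ℝ}, (∀ i, IsPMF (F' i)) →
      (∀ i r, (1 - δ i) * F' i r ≤ F i r) →
      ∀ r : ∀ i, R i, (∏ i, (1 - δ i)) * ∏ i, F' i (r i) ≤ ∏ i, F i (r i) := by
    intro F F' hF' hFF' r
    rw [← prod_mul_distrib]
    exact prod_le_prod (fun i _ => mul_nonneg (sub_nonneg.2 (hδ i).le) ((hF' i).1 _))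
      fun i _ => hFF' i _
  calc _ ≤ (∏ i, (1 - δ i)) * hockeyStick c (fun r : ∀ i, R i => ∏ i, P' i (r i))
          (fun r => ∏ i, Q' i (r i)) + (1 - ∏ i, (1 - δ i)) :=
        hockeyStick_le_of_mul_le hc (prod_nonneg fun i _ => sub_nonneg.2 (hδ i).le)
          (IsPMF.pi hP) (IsPMF.pi hP') (hprod hP' hPP') (hprod hQ' hQQ')
    _ ≤ _ := by
        gcongr
        · exact prod_nonneg fun i _ => sub_nonneg.2 (hδ i).le
        · exact hockeyStick_pi_le_of_pureIndist hε hP' hQ' hpure c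

end Product

theorem optComp_sound_general (k : ℕ) (ε δ : Fin k → ℝ)
    (hε : ∀ i, 0 ≤ ε i) (hδ : ∀ i, 0 ≤ δ i ∧ δ i < 1)
    (εg δg : ℝ)
    (hineq : (1 / ∏ i, (1 + Real.exp (ε i))) *
        ∑ S : Finset (Fin k),
          max (Real.exp (∑ i ∈ S, ε i) - Real.exp εg * Real.exp (∑ i ∈ Sᶜ, ε i)) 0
      ≤ 1 - (1 - δg) / ∏ i, (1 - δ i))
    (R : Fin k → Type) [∀ i, Fintype (R i)]
    (P0 P1 : ∀ i, R i → ℝ)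
    (hP0 : ∀ i, IsPMF (P0 i)) (hP1 : ∀ i, IsPMF (P1 i))
    (hind : ∀ i, Indist (ε i) (δ i) (P0 i) (P1 i)) :
    Indist εg δg (fun r : ∀ i, R i => ∏ i, P0 i (r i))
                 (fun r : ∀ i, R i => ∏ i, P1 i (r i)) := by
  choose P' Q' hP' hQ' hpure hPP' hQQ' using
    fun i => (hind i).exists_pureIndist (hε i) (hδ i).2 (hP0 i) (hP1 i)
  have hD : 0 < ∏ i, (1 - δ i) := prod_pos fun i _ => sub_pos.2 (hδ i).2
  set K := (1 / ∏ i, (1 + Real.exp (ε i))) *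
    ∑ S : Finset (Fin k),
      max (Real.exp (∑ i ∈ S, ε i) - Real.exp εg * Real.exp (∑ i ∈ Sᶜ, ε i)) 0
  have hδg : (∏ i, (1 - δ i)) * K + (1 - ∏ i, (1 - δ i)) ≤ δg := by
    have := mul_le_mul_of_nonneg_left hineq hD.le
    rw [mul_sub, mul_one, mul_div_cancel₀ _ hD.ne'] at this
    linarith
  have hδ1 : ∀ i, δ i < 1 := fun i => (hδ i).2
  rw [indist_iff_hockeyStick_le]
  exact ⟨(hockeyStick_pi_le_of_approx hε hδ1 hP0 hP' hQ' hpure hPP' hQQ'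
      (exp_pos εg).le).trans hδg,
    (hockeyStick_pi_le_of_approx hε hδ1 hP1 hQ' hP' (fun i => (hpure i).symm) hQQ' hPP'
      (exp_pos εg).le).trans hδg⟩

/-- Soundness direction of the optimal heterogeneous composition theorem
(Theorem 1.4 of Murtagh–Vadhan): if `(ε_g, δ_g)` satisfies the optimal composition
inequality, then the product of any `(ε_i, δ_i)`-indistinguishable pairs is
`(ε_g, δ_g)`-indistinguishable. -/
theorem optComp_sound (k : ℕ) (hk : 0 < k) (ε δ : Fin k → ℝ)
    (hε : ∀ i, 0 ≤ ε i) (hδ : ∀ i, 0 ≤ δ i ∧ δ i < 1)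
    (εg δg : ℝ) (hεg : 0 ≤ εg) (hδg : 0 ≤ δg ∧ δg < 1)
    (hineq : (1 / ∏ i, (1 + Real.exp (ε i))) *
        ∑ S : Finset (Fin k),
          max (Real.exp (∑ i ∈ S, ε i) - Real.exp εg * Real.exp (∑ i ∈ Sᶜ, ε i)) 0
      ≤ 1 - (1 - δg) / ∏ i, (1 - δ i))
    (R : Fin k → Type) [∀ i, Fintype (R i)]
    (P0 P1 : ∀ i, R i → ℝ)
    (hP0 : ∀ i, IsPMF (P0 i)) (hP1 : ∀ i, IsPMF (P1 i))
    (hind : ∀ i, Indist (ε i) (δ i) (P0 i) (P1 i)) :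
    Indist εg δg (fun r : ∀ i, R i => ∏ i, P0 i (r i))
                 (fun r : ∀ i, R i => ∏ i, P1 i (r i)) :=
  optComp_sound_general k ε δ hε hδ εg δg hineq R P0 P1 hP0 hP1 hind
end

section
/- Let k be a positive integer, ε₁,…,ε_k ≥ 0 real, δ₁,…,δ_k ∈ [0,1), and ε_g ≥ 0. Let P̃₀ᵏ = ⊗_{i=1}^k M̃_{(ε_i,δ_i)}(0) and P̃₁ᵏ = ⊗_{i=1}^k M̃_{(ε_i,δ_i)}(1) be the product distributions on {0,1,2,3}^k. Then the maximum over all subsets Q ⊆ {0,1,2,3}^k of P̃₀ᵏ(Q) − exp(ε_g)·P̃₁ᵏ(Q) equals 1 − ∏_{i=1}^k (1−δ_i) + (∏_{i=1}^k (1−δ_i)/(1+exp(ε_i))) · Σ_{S ⊆ {1,…,k}} max(exp(Σ_{i∈S} ε_i) − exp(ε_g)·exp(Σ_{i∉S} ε_i), 0). -/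
open Finset

/-- The Kairouz–Oh–Viswanath mechanism `M̃_{(ε,δ)}(b)` on `{0,1,2,3}`. -/
noncomputable def Mtilde (ε δ : ℝ) : Bool → Fin 4 → ℝ
  | false => ![δ, (1 - δ) * Real.exp ε / (1 + Real.exp ε), (1 - δ) / (1 + Real.exp ε), 0]
  | true  => ![0, (1 - δ) / (1 + Real.exp ε), (1 - δ) * Real.exp ε / (1 + Real.exp ε), δ]

/-- Tightness direction of the optimal heterogeneous composition theorem
(Theorem 1.4 of Murtagh–Vadhan): the maximum over subsets `Q ⊆ {0,1,2,3}^k` of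
`P̃₀ᵏ(Q) − exp(ε_g)·P̃₁ᵏ(Q)` for the product of the mechanisms `M̃_{(ε_i,δ_i)}`
is exactly the quantity in the optimal composition inequality. -/
theorem optComp_tight (k : ℕ) (hk : 0 < k) (ε δ : Fin k → ℝ)
    (hε : ∀ i, 0 ≤ ε i) (hδ : ∀ i, 0 ≤ δ i ∧ δ i < 1) (εg : ℝ) (hεg : 0 ≤ εg) :
    (⨆ Q : Finset (Fin k → Fin 4),
        ((∑ x ∈ Q, ∏ i, Mtilde (ε i) (δ i) false (x i))
          - Real.exp εg * ∑ x ∈ Q, ∏ i, Mtilde (ε i) (δ i) true (x i)))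
    = 1 - ∏ i, (1 - δ i)
      + (∏ i, (1 - δ i) / (1 + Real.exp (ε i))) *
        ∑ S : Finset (Fin k),
          max (Real.exp (∑ i ∈ S, ε i) - Real.exp εg * Real.exp (∑ i ∈ Sᶜ, ε i)) 0 := by
  have hepos : ∀ i, (0:ℝ) < 1 + Real.exp (ε i) := fun i => by positivity
  have hene : ∀ i, (1:ℝ) + Real.exp (ε i) ≠ 0 := fun i => (hepos i).ne'
  set c := Real.exp εg with hc
  have hc0 : 0 ≤ c := (Real.exp_pos _).le
  -- basic values
  have hF0 : ∀ i, Mtilde (ε i) (δ i) false 0 = δ i := fun i => rfl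
  have hF1 : ∀ i, Mtilde (ε i) (δ i) false 1
      = (1 - δ i) / (1 + Real.exp (ε i)) * Real.exp (ε i) := fun i => by
    show (1 - δ i) * Real.exp (ε i) / (1 + Real.exp (ε i)) = _
    ring
  have hF2 : ∀ i, Mtilde (ε i) (δ i) false 2
      = (1 - δ i) / (1 + Real.exp (ε i)) * 1 := fun i => by
    show (1 - δ i) / (1 + Real.exp (ε i)) = _; ring
  have hF3 : ∀ i, Mtilde (ε i) (δ i) false 3 = 0 := fun i => rfl
  have hG0 : ∀ i, Mtilde (ε i) (δ i) true 0 = 0 := fun i => rfl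
  have hG1 : ∀ i, Mtilde (ε i) (δ i) true 1
      = (1 - δ i) / (1 + Real.exp (ε i)) * 1 := fun i => by
    show (1 - δ i) / (1 + Real.exp (ε i)) = _; ring
  have hG2 : ∀ i, Mtilde (ε i) (δ i) true 2
      = (1 - δ i) / (1 + Real.exp (ε i)) * Real.exp (ε i) := fun i => by
    show (1 - δ i) * Real.exp (ε i) / (1 + Real.exp (ε i)) = _; ring
  have hG3 : ∀ i, Mtilde (ε i) (δ i) true 3 = δ i := fun i => rfl
  have hd1 : ∀ i, (0:ℝ) ≤ 1 - δ i := fun i => by linarith [(hδ i).2]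
  have hFnn : ∀ i r, 0 ≤ Mtilde (ε i) (δ i) false r := by
    intro i r
    fin_cases r
    · exact (hδ i).1
    · show (0:ℝ) ≤ Mtilde (ε i) (δ i) false 1
      rw [hF1]; exact mul_nonneg (div_nonneg (hd1 i) (hepos i).le) (Real.exp_pos _).le
    · show (0:ℝ) ≤ Mtilde (ε i) (δ i) false 2
      rw [hF2]; exact mul_nonneg (div_nonneg (hd1 i) (hepos i).le) zero_le_one
    · show (0:ℝ) ≤ Mtilde (ε i) (δ i) false 3
      rw [hF3]
  have hGnn : ∀ i r, 0 ≤ Mtilde (ε i) (δ i) true r := by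
    intro i r
    fin_cases r
    · exact le_of_eq (hG0 i).symm
    · show (0:ℝ) ≤ Mtilde (ε i) (δ i) true 1
      rw [hG1]; exact mul_nonneg (div_nonneg (hd1 i) (hepos i).le) zero_le_one
    · show (0:ℝ) ≤ Mtilde (ε i) (δ i) true 2
      rw [hG2]; exact mul_nonneg (div_nonneg (hd1 i) (hepos i).le) (Real.exp_pos _).le
    · show (0:ℝ) ≤ Mtilde (ε i) (δ i) true 3
      rw [hG3]; exact (hδ i).1
  set P0 : (Fin k → Fin 4) → ℝ := fun x => ∏ i, Mtilde (ε i) (δ i) false (x i) with hP0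
  set P1 : (Fin k → Fin 4) → ℝ := fun x => ∏ i, Mtilde (ε i) (δ i) true (x i) with hP1
  set d : (Fin k → Fin 4) → ℝ := fun x => P0 x - c * P1 x with hd
  have hP0nn : ∀ x, 0 ≤ P0 x := fun x => prod_nonneg fun i _ => hFnn i (x i)
  have hP1nn : ∀ x, 0 ≤ P1 x := fun x => prod_nonneg fun i _ => hGnn i (x i)
  have key : ∀ Q : Finset (Fin k → Fin 4),
      (∑ x ∈ Q, P0 x) - c * ∑ x ∈ Q, P1 x = ∑ x ∈ Q, d x := by
    intro Q; rw [Finset.mul_sum, ← Finset.sum_sub_distrib]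
  -- Step A: the sup equals the sum of positive parts
  have stepA : (⨆ Q : Finset (Fin k → Fin 4),
      ((∑ x ∈ Q, P0 x) - c * ∑ x ∈ Q, P1 x)) = ∑ x : Fin k → Fin 4, max (d x) 0 := by
    have hmax : ∀ x : Fin k → Fin 4, max (d x) 0 = if 0 < d x then d x else 0 := by
      intro x
      by_cases h : 0 < d x
      · simp [h, le_of_lt h, max_eq_left]
      · simp [h, max_eq_right (not_lt.1 h)]
    have hsum : ∑ x : Fin k → Fin 4, max (d x) 0
        = ∑ x ∈ univ.filter (fun x => 0 < d x), d x := by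
      rw [Finset.sum_filter]
      exact Finset.sum_congr rfl fun x _ => hmax x
    apply le_antisymm
    · apply ciSup_le
      intro Q
      rw [key, hsum]
      calc ∑ x ∈ Q, d x ≤ ∑ x ∈ Q, max (d x) 0 :=
            Finset.sum_le_sum fun x _ => le_max_left _ _
        _ ≤ ∑ x : Fin k → Fin 4, max (d x) 0 :=
            Finset.sum_le_sum_of_subset_of_nonneg (Finset.subset_univ Q)
              (fun x _ _ => le_max_right _ _)
        _ = _ := hsum
    · have := le_ciSup (Set.Finite.bddAbove (Set.finite_range
        (fun Q : Finset (Fin k → Fin 4) => (∑ x ∈ Q, P0 x) - c * ∑ x ∈ Q, P1 x)))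
        (univ.filter (fun x => 0 < d x))
      rw [key] at this
      rw [hsum]
      exact this
  -- per-coordinate sums
  have hFsum : ∀ i, ∑ r : Fin 4, Mtilde (ε i) (δ i) false r = 1 := by
    intro i
    rw [Fin.sum_univ_four, hF0, hF1, hF2, hF3]
    field_simp
    ring
  have hFsum12 : ∀ i, ∑ r ∈ ({1, 2} : Finset (Fin 4)), Mtilde (ε i) (δ i) false r
      = 1 - δ i := by
    intro i
    rw [Finset.sum_insert (by decide), Finset.sum_singleton, hF1, hF2]
    field_simp
    ring
  -- the "good" set
  set A : Finset (Fin k → Fin 4) :=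
    Fintype.piFinset (fun _ => ({1, 2} : Finset (Fin 4))) with hA
  have hP0total : ∑ x : Fin k → Fin 4, P0 x = 1 := by
    rw [hP0, ← Fintype.piFinset_univ, ← Finset.prod_univ_sum]
    rw [Finset.prod_congr rfl fun i _ => hFsum i, Finset.prod_const_one]
  have hP0A : ∑ x ∈ A, P0 x = ∏ i, (1 - δ i) := by
    rw [hA, hP0, ← Finset.prod_univ_sum]
    exact Finset.prod_congr rfl fun i _ => hFsum12 i
  -- off A, max(d,0) = P0
  have hoffA : ∀ x : Fin k → Fin 4, x ∉ A → max (d x) 0 = P0 x := by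
    intro x hx
    rw [hA, Fintype.mem_piFinset] at hx
    push_neg at hx
    obtain ⟨i, hi⟩ := hx
    have hcase : x i = 0 ∨ x i = 3 := by
      have h1 : x i ≠ 1 := fun h => hi (by rw [h]; decide)
      have h2 : x i ≠ 2 := fun h => hi (by rw [h]; decide)
      have h1' : (x i).val ≠ 1 := fun h => h1 (Fin.ext h)
      have h2' : (x i).val ≠ 2 := fun h => h2 (Fin.ext h)
      have hv := (x i).isLt
      have : (x i).val = 0 ∨ (x i).val = 3 := by omega
      rcases this with h | h
      · exact Or.inl (Fin.ext h)
      · exact Or.inr (Fin.ext h)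
    rcases hcase with h | h
    · have hz : P1 x = 0 :=
        Finset.prod_eq_zero (Finset.mem_univ i) (by rw [h]; exact hG0 i)
      simp only [hd, hz, mul_zero, sub_zero]
      exact max_eq_left (hP0nn x)
    · have hz : P0 x = 0 :=
        Finset.prod_eq_zero (Finset.mem_univ i) (by rw [h]; exact hF3 i)
      simp only [hd, hz, zero_sub]
      rw [max_eq_right (by simpa using mul_nonneg hc0 (hP1nn x))]
  have hout : ∑ x ∈ univ \ A, max (d x) 0 = 1 - ∏ i, (1 - δ i) := by
    rw [Finset.sum_congr rfl (fun x hx => hoffA x (Finset.mem_sdiff.mp hx).2)]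
    have h3 := Finset.sum_sdiff (f := P0) (Finset.subset_univ A)
    rw [hP0A, hP0total] at h3
    linarith
  -- the product prefactor
  have hA'nn : (0:ℝ) ≤ ∏ i, (1 - δ i) / (1 + Real.exp (ε i)) :=
    prod_nonneg fun i _ => div_nonneg (hd1 i) (hepos i).le
  -- products over the embedded functions
  have hP0S : ∀ S : Finset (Fin k), P0 (fun j => if j ∈ S then (1:Fin 4) else 2)
      = (∏ i, (1 - δ i) / (1 + Real.exp (ε i))) * Real.exp (∑ i ∈ S, ε i) := by
    intro S
    have hpt : ∀ i, Mtilde (ε i) (δ i) false (if i ∈ S then (1:Fin 4) else 2)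
        = ((1 - δ i) / (1 + Real.exp (ε i))) * (if i ∈ S then Real.exp (ε i) else 1) := by
      intro i
      by_cases h : i ∈ S
      · simp only [h, if_true]; exact hF1 i
      · simp only [h, if_false]; exact hF2 i
    simp only [hP0]
    rw [Finset.prod_congr rfl fun i _ => hpt i, Finset.prod_mul_distrib,
      Finset.prod_ite_mem, Finset.univ_inter, Real.exp_sum]
  have hP1S : ∀ S : Finset (Fin k), P1 (fun j => if j ∈ S then (1:Fin 4) else 2)
      = (∏ i, (1 - δ i) / (1 + Real.exp (ε i))) * Real.exp (∑ i ∈ Sᶜ, ε i) := by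
    intro S
    have hpt : ∀ i, Mtilde (ε i) (δ i) true (if i ∈ S then (1:Fin 4) else 2)
        = ((1 - δ i) / (1 + Real.exp (ε i))) * (if i ∈ Sᶜ then Real.exp (ε i) else 1) := by
      intro i
      by_cases h : i ∈ S
      · simp only [h, if_true, Finset.mem_compl, not_true, if_false]; exact hG1 i
      · simp only [h, if_false, Finset.mem_compl, not_false_iff, if_true]; exact hG2 i
    simp only [hP1]
    rw [Finset.prod_congr rfl fun i _ => hpt i, Finset.prod_mul_distrib,
      Finset.prod_ite_mem, Finset.univ_inter, Real.exp_sum]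
  have hin : ∑ x ∈ A, max (d x) 0
      = (∏ i, (1 - δ i) / (1 + Real.exp (ε i))) *
        ∑ S : Finset (Fin k),
          max (Real.exp (∑ i ∈ S, ε i) - c * Real.exp (∑ i ∈ Sᶜ, ε i)) 0 := by
    rw [Finset.mul_sum]
    symm
    refine Finset.sum_bij' (i := fun (S : Finset (Fin k)) _ => fun j => if j ∈ S then (1:Fin 4) else 2)
      (j := fun (x : Fin k → Fin 4) _ => univ.filter (fun j => x j = 1))
      (fun S _ => ?_) (fun x hx => Finset.mem_univ _) (fun S _ => ?_) (fun x hx => ?_)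
      (fun S _ => ?_)
    · rw [hA, Fintype.mem_piFinset]
      intro a
      by_cases h : a ∈ S <;> simp [h]
    · ext j
      simp only [Finset.mem_filter, Finset.mem_univ, true_and]
      by_cases h : j ∈ S <;> simp [h]
    · rw [hA, Fintype.mem_piFinset] at hx
      funext j
      by_cases h : x j = 1
      · simp [Finset.mem_filter, h]
      · have : x j = 2 := by
          have := hx j
          simp only [Finset.mem_insert, Finset.mem_singleton] at this
          tauto
        simp [Finset.mem_filter, h, this]
    · simp only [hd, hP0S S, hP1S S]
      rw [mul_max_of_nonneg _ _ hA'nn, mul_zero, mul_sub, mul_left_comm]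
  rw [stepA, ← Finset.sum_sdiff (Finset.subset_univ A), hout, hin]
end

section
/- Let ε ≥ 0, δ ∈ [0,1), and let P₀, P₁ be probability mass functions on a finite type R that are (ε,δ)-indistinguishable. Then there exists a function T : {0,1,2,3} → PMF(R) such that the pushforward of M̃_{(ε,δ)}(b) under T (i.e., the bind of M̃_{(ε,δ)}(b) with T) equals P_b, for both b = 0 and b = 1. -/
open Finset

lemma hockey {R : Type*} [Fintype R] (e δ : ℝ) (P0 P1 : R → ℝ)
    (hsum : ∑ r, P0 r = 1)
    (hd : ∀ S : Finset R, ∑ r ∈ S, P0 r ≤ e * ∑ r ∈ S, P1 r + δ) :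
    1 - δ ≤ ∑ r, min (P0 r) (e * P1 r) := by
  classical
  set S := Finset.univ.filter (fun r => e * P1 r < P0 r) with hSdef
  have hS := hd S
  have h1 : ∑ r ∈ S, min (P0 r) (e * P1 r) = e * ∑ r ∈ S, P1 r := by
    rw [Finset.mul_sum]
    refine Finset.sum_congr rfl fun r hr => ?_
    rw [hSdef, Finset.mem_filter] at hr
    rw [min_eq_right hr.2.le]
  have h2 : ∑ r ∈ Sᶜ, min (P0 r) (e * P1 r) = ∑ r ∈ Sᶜ, P0 r := by
    refine Finset.sum_congr rfl fun r hr => ?_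
    rw [Finset.mem_compl, hSdef, Finset.mem_filter] at hr
    push_neg at hr
    rw [min_eq_left (hr (Finset.mem_univ r))]
  have h3 : ∑ r ∈ S, min (P0 r) (e * P1 r) + ∑ r ∈ Sᶜ, min (P0 r) (e * P1 r)
      = ∑ r, min (P0 r) (e * P1 r) := Finset.sum_add_sum_compl S _
  have h4 : ∑ r ∈ S, P0 r + ∑ r ∈ Sᶜ, P0 r = 1 := by
    rw [Finset.sum_add_sum_compl, hsum]
  linarith

lemma decomp {R : Type*} [Fintype R] (e δ : ℝ) (he : 1 ≤ e) (hδ1 : δ < 1)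
    (P0 P1 : R → ℝ) (h0 : ∀ r, 0 ≤ P0 r) (h1 : ∀ r, 0 ≤ P1 r)
    (hS1 : 1 - δ ≤ ∑ r, min (P1 r) (e * P0 r))
    (hle : ∑ r, min (P1 r) (e * P0 r) ≤ ∑ r, min (P0 r) (e * P1 r)) :
    ∃ Q0 Q1 : R → ℝ, (∀ r, 0 ≤ Q0 r) ∧ (∑ r, Q0 r = 1) ∧ (∀ r, 0 ≤ Q1 r) ∧
      (∑ r, Q1 r = 1) ∧ (∀ r, Q0 r ≤ e * Q1 r) ∧ (∀ r, Q1 r ≤ e * Q0 r) ∧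
      (∀ r, (1 - δ) * Q0 r ≤ P0 r) ∧ (∀ r, (1 - δ) * Q1 r ≤ P1 r) := by
  classical
  have hepos : (0:ℝ) < e := lt_of_lt_of_le one_pos he
  have hα : (0:ℝ) < 1 - δ := by linarith
  set g0 : R → ℝ := fun r => min (P0 r) (e * P1 r) with hg0def
  set g1 : R → ℝ := fun r => min (P1 r) (e * P0 r) with hg1def
  set S0 : ℝ := ∑ r, g0 r with hS0def
  set S1 : ℝ := ∑ r, g1 r with hS1def
  have hS1pos : 0 < S1 := lt_of_lt_of_le hα hS1
  have hg0nn : ∀ r, 0 ≤ g0 r := fun r => le_min (h0 r) (mul_nonneg hepos.le (h1 r))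
  have hg1nn : ∀ r, 0 ≤ g1 r := fun r => le_min (h1 r) (mul_nonneg hepos.le (h0 r))
  have hg1le : ∀ r, g1 r ≤ e * g0 r := by
    intro r
    rcases le_total (P0 r) (e * P1 r) with h | h
    · rw [hg0def]; simp only [min_eq_left h]
      exact le_trans (min_le_right _ _) le_rfl
    · rw [hg0def]; simp only [min_eq_right h]
      have hee : (1:ℝ) ≤ e * e := by nlinarith
      calc g1 r ≤ P1 r := min_le_left _ _
        _ ≤ e * (e * P1 r) := by nlinarith [mul_le_mul_of_nonneg_right hee (h1 r)]
  have hg0le : ∀ r, g0 r ≤ e * g1 r := by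
    intro r
    rcases le_total (P1 r) (e * P0 r) with h | h
    · rw [hg1def]; simp only [min_eq_left h]
      exact le_trans (min_le_right _ _) le_rfl
    · rw [hg1def]; simp only [min_eq_right h]
      have hee : (1:ℝ) ≤ e * e := by nlinarith
      calc g0 r ≤ P0 r := min_le_left _ _
        _ ≤ e * (e * P0 r) := by nlinarith [mul_le_mul_of_nonneg_right hee (h0 r)]
  set t : ℝ := (S1 - S1 / e) / (S0 - S1 / e) with htdef
  have hkey : 0 ≤ t ∧ t ≤ 1 ∧ S1 / e + t * (S0 - S1 / e) = S1 := by
    rcases eq_or_lt_of_le he with he1 | he1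
    · have hgg : g0 = g1 := by
        funext r; rw [hg0def, hg1def]; simp only [← he1, one_mul]; exact min_comm _ _
      have hSS : S0 = S1 := by rw [hS0def, hS1def, hgg]
      have ht0 : t = 0 := by rw [htdef, ← he1]; simp
      refine ⟨le_of_eq ht0.symm, by rw [ht0]; norm_num, ?_⟩
      rw [ht0, ← he1]; simp
    · have hd1 : S1 / e < S1 := div_lt_self hS1pos he1
      have hdpos : 0 < S0 - S1 / e := by linarith
      have hnum : 0 ≤ S1 - S1 / e := by linarith
      refine ⟨div_nonneg hnum hdpos.le, (div_le_one hdpos).mpr (by linarith), ?_⟩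
      rw [htdef, div_mul_cancel₀ _ hdpos.ne']
      ring
  obtain ⟨ht0, ht1, htsum⟩ := hkey
  set h : R → ℝ := fun r => g1 r / e + t * (g0 r - g1 r / e) with hhdef
  have hgd : ∀ r, g1 r / e ≤ g0 r := fun r => (div_le_iff₀ hepos).mpr (by linarith [hg1le r])
  have hhge : ∀ r, g1 r / e ≤ h r := by
    intro r; rw [hhdef]; simp only
    nlinarith [hgd r]
  have hhle : ∀ r, h r ≤ g0 r := by
    intro r; rw [hhdef]; simp only
    nlinarith [hgd r]
  have hhnn : ∀ r, 0 ≤ h r := fun r => le_trans (div_nonneg (hg1nn r) hepos.le) (hhge r)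
  have hhsum : ∑ r, h r = S1 := by
    rw [hhdef]
    rw [Finset.sum_add_distrib, ← Finset.mul_sum, Finset.sum_sub_distrib, ← Finset.sum_div]
    rw [← hS0def, ← hS1def]
    exact htsum
  refine ⟨fun r => h r / S1, fun r => g1 r / S1, ?_, ?_, ?_, ?_, ?_, ?_, ?_, ?_⟩
  · exact fun r => div_nonneg (hhnn r) hS1pos.le
  · rw [← Finset.sum_div, hhsum, div_self hS1pos.ne']
  · exact fun r => div_nonneg (hg1nn r) hS1pos.le
  · rw [← Finset.sum_div, ← hS1def, div_self hS1pos.ne']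
  · intro r
    show h r / S1 ≤ e * (g1 r / S1)
    rw [← mul_div_assoc]
    exact (div_le_div_iff_of_pos_right hS1pos).mpr ((hhle r).trans (hg0le r))
  · intro r
    show g1 r / S1 ≤ e * (h r / S1)
    rw [← mul_div_assoc]
    refine (div_le_div_iff_of_pos_right hS1pos).mpr ?_
    have := (div_le_iff₀ hepos).mp (hhge r)
    linarith [this.trans_eq (mul_comm (h r) e)]
  · intro r
    show (1 - δ) * (h r / S1) ≤ P0 r
    have h1' : (1 - δ) * (h r / S1) ≤ S1 * (h r / S1) :=
      mul_le_mul_of_nonneg_right hS1 (div_nonneg (hhnn r) hS1pos.le)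
    have h2' : S1 * (h r / S1) = h r := by field_simp
    have h3' : g0 r ≤ P0 r := min_le_left _ _
    calc (1 - δ) * (h r / S1) ≤ S1 * (h r / S1) := h1'
      _ = h r := h2'
      _ ≤ P0 r := (hhle r).trans h3'
  · intro r
    show (1 - δ) * (g1 r / S1) ≤ P1 r
    have h1' : (1 - δ) * (g1 r / S1) ≤ S1 * (g1 r / S1) :=
      mul_le_mul_of_nonneg_right hS1 (div_nonneg (hg1nn r) hS1pos.le)
    have h2' : S1 * (g1 r / S1) = g1 r := by field_simp
    have h3' : g1 r ≤ P1 r := min_le_left _ _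
    calc (1 - δ) * (g1 r / S1) ≤ S1 * (g1 r / S1) := h1'
      _ = g1 r := h2'
      _ ≤ P1 r := h3'

/-- The Kairouz–Oh–Viswanath simulation lemma (Lemma 3.2 of Murtagh–Vadhan):
any `(ε,δ)`-indistinguishable pair `P₀, P₁` can be obtained as a post-processing
(bind with a kernel `T : {0,1,2,3} → PMF(R)`) of the pair `M̃_{(ε,δ)}(0), M̃_{(ε,δ)}(1)`. -/
theorem simulation (ε δ : ℝ) (hε : 0 ≤ ε) (hδ : 0 ≤ δ ∧ δ < 1)
    {R : Type*} [Fintype R] (P0 P1 : R → ℝ)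
    (hP0 : IsPMF P0) (hP1 : IsPMF P1) (hind : Indist ε δ P0 P1) :
    ∃ T : Fin 4 → R → ℝ,
      (∀ x, IsPMF (T x)) ∧
      (∀ r, ∑ x, Mtilde ε δ false x * T x r = P0 r) ∧
      (∀ r, ∑ x, Mtilde ε δ true x * T x r = P1 r) := by
  classical
  set e : ℝ := Real.exp ε with hedef
  have he : 1 ≤ e := Real.one_le_exp hε
  have hepos : (0:ℝ) < e := Real.exp_pos ε
  have h1e : (0:ℝ) < 1 + e := by linarith
  have hα : (0:ℝ) < 1 - δ := by linarith [hδ.2]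
  -- hockey stick bounds
  have hm0 : 1 - δ ≤ ∑ r, min (P0 r) (e * P1 r) :=
    hockey e δ P0 P1 hP0.2 (fun S => (hind S).1)
  have hm1 : 1 - δ ≤ ∑ r, min (P1 r) (e * P0 r) :=
    hockey e δ P1 P0 hP1.2 (fun S => (hind S).2)
  -- get the pure-DP pair
  obtain ⟨Q0, Q1, hQ0nn, hQ0s, hQ1nn, hQ1s, hQ01, hQ10, hb0, hb1⟩ :
      ∃ Q0 Q1 : R → ℝ, (∀ r, 0 ≤ Q0 r) ∧ (∑ r, Q0 r = 1) ∧ (∀ r, 0 ≤ Q1 r) ∧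
        (∑ r, Q1 r = 1) ∧ (∀ r, Q0 r ≤ e * Q1 r) ∧ (∀ r, Q1 r ≤ e * Q0 r) ∧
        (∀ r, (1 - δ) * Q0 r ≤ P0 r) ∧ (∀ r, (1 - δ) * Q1 r ≤ P1 r) := by
    rcases le_total (∑ r, min (P1 r) (e * P0 r)) (∑ r, min (P0 r) (e * P1 r)) with hc | hc
    · exact decomp e δ he hδ.2 P0 P1 hP0.1 hP1.1 hm1 hc
    · obtain ⟨Q1, Q0, a1, a2, a3, a4, a5, a6, a7, a8⟩ :=
        decomp e δ he hδ.2 P1 P0 hP1.1 hP0.1 hm0 hc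
      exact ⟨Q0, Q1, a3, a4, a1, a2, a6, a5, a8, a7⟩
  -- define the kernel
  set A : R → ℝ := if δ = 0 then P0 else fun r => (P0 r - (1 - δ) * Q0 r) / δ with hAdef
  set B : R → ℝ := if δ = 0 then P1 else fun r => (P1 r - (1 - δ) * Q1 r) / δ with hBdef
  set T1 : R → ℝ := if e = 1 then Q0 else fun r => (e * Q0 r - Q1 r) / (e - 1) with hT1def
  set T2 : R → ℝ := if e = 1 then Q1 else fun r => (e * Q1 r - Q0 r) / (e - 1) with hT2def
  -- equality facts in degenerate cases
  have hQeqP0 : δ = 0 → ∀ r, (1 - δ) * Q0 r = P0 r := by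
    intro h0 r
    have hsum : ∑ r, (1 - δ) * Q0 r = ∑ r, P0 r := by
      rw [← Finset.mul_sum, hQ0s, hP0.2, h0]; ring
    exact (Finset.sum_eq_sum_iff_of_le (fun i _ => hb0 i)).mp hsum r (Finset.mem_univ r)
  have hQeqP1 : δ = 0 → ∀ r, (1 - δ) * Q1 r = P1 r := by
    intro h0 r
    have hsum : ∑ r, (1 - δ) * Q1 r = ∑ r, P1 r := by
      rw [← Finset.mul_sum, hQ1s, hP1.2, h0]; ring
    exact (Finset.sum_eq_sum_iff_of_le (fun i _ => hb1 i)).mp hsum r (Finset.mem_univ r)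
  have hQQ : e = 1 → ∀ r, Q1 r = Q0 r := by
    intro h1 r
    have := hQ01 r; have := hQ10 r
    rw [h1, one_mul] at *
    linarith
  -- key pointwise identities
  have hA : ∀ r, δ * A r = P0 r - (1 - δ) * Q0 r := by
    intro r
    by_cases h0 : δ = 0
    · have h' := hQeqP0 h0 r
      rw [hAdef]; simp only [h0, if_true, eq_self_iff_true]
      rw [h0] at h'; linarith
    · rw [hAdef]; simp only [h0, if_false]
      field_simp
  have hB : ∀ r, δ * B r = P1 r - (1 - δ) * Q1 r := by
    intro r
    by_cases h0 : δ = 0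
    · have h' := hQeqP1 h0 r
      rw [hBdef]; simp only [h0, if_true, eq_self_iff_true]
      rw [h0] at h'; linarith
    · rw [hBdef]; simp only [h0, if_false]
      field_simp
  have hT : ∀ r, (e / (1 + e)) * T1 r + (1 / (1 + e)) * T2 r = Q0 r := by
    intro r
    by_cases h1 : e = 1
    · rw [hT1def, hT2def]; simp only [h1, if_true, eq_self_iff_true]
      rw [hQQ h1 r]; ring
    · rw [hT1def, hT2def]; simp only [h1, if_false]
      have : e - 1 ≠ 0 := sub_ne_zero.mpr h1
      field_simp
      ring
  have hT' : ∀ r, (1 / (1 + e)) * T1 r + (e / (1 + e)) * T2 r = Q1 r := by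
    intro r
    by_cases h1 : e = 1
    · rw [hT1def, hT2def]; simp only [h1, if_true, eq_self_iff_true]
      rw [hQQ h1 r]; ring
    · rw [hT1def, hT2def]; simp only [h1, if_false]
      have : e - 1 ≠ 0 := sub_ne_zero.mpr h1
      field_simp
      ring
  -- PMF properties
  have hApmf : IsPMF A := by
    by_cases h0 : δ = 0
    · rw [hAdef]; simpa [h0] using hP0
    · have hδpos : 0 < δ := lt_of_le_of_ne hδ.1 (Ne.symm h0)
      rw [hAdef]; simp only [h0, if_false]
      constructor
      · intro r; exact div_nonneg (by linarith [hb0 r]) hδpos.le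
      · rw [← Finset.sum_div, Finset.sum_sub_distrib, ← Finset.mul_sum, hP0.2, hQ0s]
        field_simp
        ring
  have hBpmf : IsPMF B := by
    by_cases h0 : δ = 0
    · rw [hBdef]; simpa [h0] using hP1
    · have hδpos : 0 < δ := lt_of_le_of_ne hδ.1 (Ne.symm h0)
      rw [hBdef]; simp only [h0, if_false]
      constructor
      · intro r; exact div_nonneg (by linarith [hb1 r]) hδpos.le
      · rw [← Finset.sum_div, Finset.sum_sub_distrib, ← Finset.mul_sum, hP1.2, hQ1s]
        field_simp
        ring
  have hT1pmf : IsPMF T1 := by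
    by_cases h1 : e = 1
    · rw [hT1def]; simp only [h1, if_true, eq_self_iff_true]; exact ⟨hQ0nn, hQ0s⟩
    · have he1 : 0 < e - 1 := sub_pos.mpr (lt_of_le_of_ne he (Ne.symm h1))
      rw [hT1def]; simp only [h1, if_false]
      constructor
      · intro r; exact div_nonneg (by linarith [hQ10 r]) he1.le
      · rw [← Finset.sum_div, Finset.sum_sub_distrib, ← Finset.mul_sum, hQ0s, hQ1s]
        field_simp
  have hT2pmf : IsPMF T2 := by
    by_cases h1 : e = 1
    · rw [hT2def]; simp only [h1, if_true, eq_self_iff_true]; exact ⟨hQ1nn, hQ1s⟩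
    · have he1 : 0 < e - 1 := sub_pos.mpr (lt_of_le_of_ne he (Ne.symm h1))
      rw [hT2def]; simp only [h1, if_false]
      constructor
      · intro r; exact div_nonneg (by linarith [hQ01 r]) he1.le
      · rw [← Finset.sum_div, Finset.sum_sub_distrib, ← Finset.mul_sum, hQ1s, hQ0s]
        field_simp
  refine ⟨![A, T1, T2, B], ?_, ?_, ?_⟩
  · intro x
    fin_cases x <;> simp [hApmf, hBpmf, hT1pmf, hT2pmf]
  · intro r
    have hexp : Mtilde ε δ false = ![δ, (1 - δ) * e / (1 + e), (1 - δ) / (1 + e), 0] := rfl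
    rw [hexp, Fin.sum_univ_four]
    simp only [Matrix.cons_val_zero, Matrix.cons_val_one, Matrix.head_cons,
      Matrix.cons_val_two, Matrix.tail_cons, Matrix.cons_val_three]
    linear_combination hA r + (1 - δ) * hT r
  · intro r
    have hexp : Mtilde ε δ true = ![0, (1 - δ) / (1 + e), (1 - δ) * e / (1 + e), δ] := rfl
    rw [hexp, Fin.sum_univ_four]
    simp only [Matrix.cons_val_zero, Matrix.cons_val_one, Matrix.head_cons,
      Matrix.cons_val_two, Matrix.tail_cons, Matrix.cons_val_three]
    linear_combination hB r + (1 - δ) * hT' r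
end

section
/- Let ε ≥ 0 and let P₀, P₁ be probability mass functions on a finite type R. Define δ₀ = Σ_{r ∈ R : P₀(r) > exp(ε)·P₁(r)} (P₀(r) − exp(ε)·P₁(r)) and δ₁ = Σ_{r ∈ R : P₁(r) > exp(ε)·P₀(r)} (P₁(r) − exp(ε)·P₀(r)), and set α₀ = 1−δ₀ and α₁ = 1−δ₁. Then exp(ε)·α₁ ≥ α₀ and exp(ε)·α₀ ≥ α₁. -/
/-! Since `P₀` has mass one, `α₀ = 1 - δ₀ = Σ_r min(P₀ r, e^ε P₁ r)`, and symmetrically for `α₁`.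
The inequality `e^ε α₁ ≥ α₀` then holds termwise: `min(p, c q) ≤ min(c q, c² p) = c min(q, c p)`
for `c = e^ε ≥ 1` and `p ≥ 0`. -/

open Finset

lemma sub_max_sub_zero_eq_min {α : Type*} [AddCommGroup α] [LinearOrder α] [IsOrderedAddMonoid α]
    (a b : α) : a - max (a - b) 0 = min a b := by
  rcases le_total a b with h | h
  · rw [max_eq_right (sub_nonpos.2 h), min_eq_left h, sub_zero]
  · rw [max_eq_left (sub_nonneg.2 h), min_eq_right h, sub_sub_cancel]

lemma IsPMF.one_sub_sum_max_sub_eq_sum_min {R : Type*} [Fintype R] {P : R → ℝ} (hP : IsPMF P)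
    (g : R → ℝ) : 1 - ∑ r, max (P r - g r) 0 = ∑ r, min (P r) (g r) := by
  simp only [← hP.2, ← sum_sub_distrib, sub_max_sub_zero_eq_min]

lemma min_le_mul_min_mul {c p q : ℝ} (hc : 1 ≤ c) (hp : 0 ≤ p) :
    min p (c * q) ≤ c * min q (c * p) := by
  have hcp : p ≤ c * p := le_mul_of_one_le_left hp hc
  have hp_le : p ≤ c * (c * p) := hcp.trans (le_mul_of_one_le_left (hp.trans hcp) hc)
  calc min p (c * q) = min (c * q) p := min_comm _ _
    _ ≤ min (c * q) (c * (c * p)) := min_le_min_left _ hp_le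
    _ = c * min q (c * p) := (mul_min_of_nonneg _ _ (by linarith)).symm

lemma sum_min_le_mul_sum_min {R : Type*} [Fintype R] {c : ℝ} (hc : 1 ≤ c) {P : R → ℝ}
    (hP : ∀ r, 0 ≤ P r) (Q : R → ℝ) :
    ∑ r, min (P r) (c * Q r) ≤ c * ∑ r, min (Q r) (c * P r) := by
  rw [mul_sum]
  exact sum_le_sum fun r _ => min_le_mul_min_mul hc (hP r)

lemma IsPMF.one_sub_sum_max_le {R : Type*} [Fintype R] {c : ℝ} (hc : 1 ≤ c) {P Q : R → ℝ}
    (hP : IsPMF P) (hQ : IsPMF Q) :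
    1 - ∑ r, max (P r - c * Q r) 0 ≤ c * (1 - ∑ r, max (Q r - c * P r) 0) := by
  rw [hP.one_sub_sum_max_sub_eq_sum_min, hQ.one_sub_sum_max_sub_eq_sum_min]
  exact sum_min_le_mul_sum_min hc hP.1 Q

/-- Lemma 3.3 of Murtagh–Vadhan: with
`δ₀ = Σ_{r : P₀(r) > exp(ε)·P₁(r)} (P₀(r) − exp(ε)·P₁(r))`
(equivalently `Σ_r max(P₀(r) − exp(ε)·P₁(r), 0)`) and symmetrically `δ₁`,
setting `α₀ = 1 − δ₀` and `α₁ = 1 − δ₁`, we have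
`exp(ε)·α₁ ≥ α₀` and `exp(ε)·α₀ ≥ α₁`. -/
theorem alpha_ineq (ε : ℝ) (hε : 0 ≤ ε) {R : Type*} [Fintype R]
    (P0 P1 : R → ℝ) (hP0 : IsPMF P0) (hP1 : IsPMF P1)
    (δ0 δ1 : ℝ)
    (hδ0 : δ0 = ∑ r, max (P0 r - Real.exp ε * P1 r) 0)
    (hδ1 : δ1 = ∑ r, max (P1 r - Real.exp ε * P0 r) 0) :
    Real.exp ε * (1 - δ1) ≥ 1 - δ0 ∧ Real.exp ε * (1 - δ0) ≥ 1 - δ1 := by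
  have he : 1 ≤ Real.exp ε := Real.one_le_exp hε
  subst hδ0 hδ1
  exact ⟨hP0.one_sub_sum_max_le he hP1, hP1.one_sub_sum_max_le he hP0⟩
end

section
/- Let ε > 0 and δ₀, δ₁, δ ∈ [0,1) satisfy exp(ε)·(1−δ₀) ≥ 1−δ₁, exp(ε)·(1−δ₁) ≥ 1−δ₀, δ₀ ≤ δ, and δ₁ ≤ δ. Then there exists a function T'' : {0,1,2,3} → PMF({0,1,2,3}) such that the bind of M̃_{(ε,δ)}(b) with T'' equals M̃_{(ε,δ₀,δ₁)}(b), for both b = 0 and b = 1. -/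
open Finset

/-- The generalized mechanism `M̃_{(ε,δ₀,δ₁)}(b)` on `{0,1,2,3}`, with
`α₀ = 1 − δ₀` and `α₁ = 1 − δ₁`. -/
noncomputable def Mgen (ε δ0 δ1 : ℝ) : Bool → Fin 4 → ℝ
  | false => ![δ0,
      (Real.exp (2 * ε) * (1 - δ0) - Real.exp ε * (1 - δ1)) / (Real.exp (2 * ε) - 1),
      (Real.exp ε * (1 - δ1) - (1 - δ0)) / (Real.exp (2 * ε) - 1), 0]
  | true  => ![0,
      (Real.exp ε * (1 - δ0) - (1 - δ1)) / (Real.exp (2 * ε) - 1),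
      (Real.exp (2 * ε) * (1 - δ1) - Real.exp ε * (1 - δ0)) / (Real.exp (2 * ε) - 1), δ1]

/-!
Write `e = exp ε`, `α = 1 − δ`, `αᵢ = 1 − δᵢ` and `β = α / (1 + e)`. Then
`M̃_{(ε,δ)}(0) = (δ, eβ, β, 0)`, `M̃_{(ε,δ)}(1) = (0, β, eβ, δ)`, and
`M̃_{(ε,δ₀,δ₁)}(0) = (δ₀, eγ₀, γ₁, 0)`, `M̃_{(ε,δ₀,δ₁)}(1) = (0, γ₀, eγ₁, δ₁)` with
`γ₀ = (eα₀ − α₁)/(e² − 1)` and `γ₁ = (eα₁ − α₀)/(e² − 1)`, both nonnegative by the hypotheses.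

The kernel is a product of two stochastic matrices. The first keeps the atom at `0` with
probability `δ₀/δ` and otherwise moves it to `1`, and symmetrically for `3`, which produces
`(δ₀, α₀ − β, β, 0)` and `(0, β, α₁ − β, δ₁)`. The second is the channel on the middle outcomes
`{1, 2}` that Cramer's rule forces: its rows are `(γ₀(eα₁ − α), γ₁(α₁ − α)) / D` and
`(γ₀(α₀ − α), γ₁(eα₀ − α)) / D`, where `D = α₀α₁ − β(α₀ + α₁) > 0` is the determinant of the
merged middle masses. Every factor is nonnegative because `α ≤ αᵢ`, and the rows sum to `1`
because `eγ₀ + γ₁ = α₀` and `γ₀ + eγ₁ = α₁`.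
-/

open Matrix

noncomputable section

def mgenWeight (e a b : ℝ) : ℝ := (e * a - b) / (e ^ 2 - 1)

section Weights

variable {e a b : ℝ}

lemma mgenWeight_nonneg (he : 1 < e) (h : b ≤ e * a) : 0 ≤ mgenWeight e a b :=
  div_nonneg (by linarith) (by nlinarith)

lemma mul_mgenWeight_add_mgenWeight (he : 1 < e) :
    e * mgenWeight e a b + mgenWeight e b a = a := by
  have : e ^ 2 - 1 ≠ 0 := by nlinarith
  unfold mgenWeight
  field_simp
  ring

lemma mgenWeight_add_mgenWeight (he : 1 < e) :
    mgenWeight e a b + mgenWeight e b a = (a + b) / (1 + e) := by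
  have : e ^ 2 - 1 ≠ 0 := by nlinarith
  have : 1 + e ≠ 0 := by linarith
  unfold mgenWeight
  field_simp
  ring

end Weights

def mergedDet (e α a0 a1 : ℝ) : ℝ := a0 * a1 - α / (1 + e) * (a0 + a1)

def middleKernel (e α a0 a1 : ℝ) : Matrix (Fin 4) (Fin 4) ℝ :=
  let D := mergedDet e α a0 a1
  !![1, 0, 0, 0;
     0, mgenWeight e a0 a1 * (e * a1 - α) / D, mgenWeight e a1 a0 * (a1 - α) / D, 0;
     0, mgenWeight e a0 a1 * (a0 - α) / D, mgenWeight e a1 a0 * (e * a0 - α) / D, 0;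
     0, 0, 0, 1]

section Middle

variable {e α a0 a1 : ℝ}

lemma mergedDet_comm : mergedDet e α a0 a1 = mergedDet e α a1 a0 := by
  unfold mergedDet; ring

lemma mergedDet_mul_left (he : 1 + e ≠ 0) (β : ℝ) :
    mergedDet e ((1 + e) * β) a0 a1 = a0 * a1 - β * (a0 + a1) := by
  rw [mergedDet, mul_div_cancel_left₀ _ he]

lemma mergedDet_pos (he : 1 < e) (hα : 0 < α) (h0 : α ≤ a0) (h1 : α ≤ a1) :
    0 < mergedDet e α a0 a1 := by
  obtain ⟨β, rfl⟩ : ∃ β, α = (1 + e) * β := ⟨α / (1 + e), by field_simp⟩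
  have hβ : 0 < β := by nlinarith
  have heβ : β < e * β := by nlinarith
  have hprod : (e * β) * (e * β) ≤ (a0 - β) * (a1 - β) :=
    mul_le_mul (by linarith) (by linarith) (by linarith) (by linarith)
  rw [mergedDet_mul_left (by linarith)]
  nlinarith [mul_self_lt_mul_self hβ.le heβ]

lemma mgenWeight_mul_add_mgenWeight_mul (he : 1 < e) :
    mgenWeight e a0 a1 * (e * a1 - α) + mgenWeight e a1 a0 * (a1 - α) =
      mergedDet e α a0 a1 := by
  have h := mul_mgenWeight_add_mgenWeight (a := a0) (b := a1) he
  have h' := mgenWeight_add_mgenWeight (a := a0) (b := a1) he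
  unfold mergedDet
  linear_combination a1 * h - α * h'

lemma middleKernel_mem_rowStochastic (he : 1 < e) (hα : 0 < α) (h0 : α ≤ a0) (h1 : α ≤ a1)
    (h01 : a1 ≤ e * a0) (h10 : a0 ≤ e * a1) :
    middleKernel e α a0 a1 ∈ rowStochastic ℝ (Fin 4) := by
  have hD := mergedDet_pos he hα h0 h1
  have hw0 := mgenWeight_nonneg he h01
  have hw1 := mgenWeight_nonneg he h10
  rw [mem_rowStochastic_iff_sum]
  refine ⟨fun i j => ?_, fun i => ?_⟩
  · fin_cases i <;> fin_cases j <;>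
      simp only [middleKernel, of_apply, Matrix.cons_val, Fin.reduceFinMk, le_refl,
        zero_le_one] <;>
      first
      | exact div_nonneg (mul_nonneg hw0 (by nlinarith)) hD.le
      | exact div_nonneg (mul_nonneg hw1 (by nlinarith)) hD.le
  · fin_cases i <;>
      simp only [middleKernel, Fin.sum_univ_four, of_apply, Matrix.cons_val, Fin.reduceFinMk,
        add_zero, zero_add] <;>
      rw [← add_div, div_eq_one_iff_eq hD.ne']
    · exact mgenWeight_mul_add_mgenWeight_mul he
    · rw [add_comm, mergedDet_comm, mgenWeight_mul_add_mgenWeight_mul he]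

lemma vecMul_middleKernel_false (he : 1 + e ≠ 0) (hD : mergedDet e α a0 a1 ≠ 0) (d : ℝ) :
    ![d, a0 - α / (1 + e), α / (1 + e), 0] ᵥ* middleKernel e α a0 a1 =
      ![d, e * mgenWeight e a0 a1, mgenWeight e a1 a0, 0] := by
  obtain ⟨β, rfl⟩ : ∃ β, α = (1 + e) * β := ⟨α / (1 + e), by field_simp⟩
  rw [mul_div_cancel_left₀ _ he]
  rw [mergedDet_mul_left he] at hD
  ext j
  fin_cases j <;>
    simp only [vecMul, dotProduct, middleKernel, mergedDet_mul_left he, Fin.sum_univ_four,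
      of_apply, Matrix.cons_val, Fin.reduceFinMk, mul_zero, mul_one, zero_add, add_zero] <;>
    rw [mul_div_assoc', mul_div_assoc', ← add_div, div_eq_iff hD] <;>
    ring

lemma vecMul_middleKernel_true (he : 1 + e ≠ 0) (hD : mergedDet e α a0 a1 ≠ 0) (d : ℝ) :
    ![0, α / (1 + e), a1 - α / (1 + e), d] ᵥ* middleKernel e α a0 a1 =
      ![0, mgenWeight e a0 a1, e * mgenWeight e a1 a0, d] := by
  obtain ⟨β, rfl⟩ : ∃ β, α = (1 + e) * β := ⟨α / (1 + e), by field_simp⟩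
  rw [mul_div_cancel_left₀ _ he]
  rw [mergedDet_mul_left he] at hD
  ext j
  fin_cases j <;>
    simp only [vecMul, dotProduct, middleKernel, mergedDet_mul_left he, Fin.sum_univ_four,
      of_apply, Matrix.cons_val, Fin.reduceFinMk, mul_zero, mul_one, zero_add, add_zero] <;>
    rw [mul_div_assoc', mul_div_assoc', ← add_div, div_eq_iff hD] <;>
    ring

end Middle

lemma isPMF_of_mem_rowStochastic {n : Type*} [Fintype n] [DecidableEq n] {M : Matrix n n ℝ}
    (hM : M ∈ rowStochastic ℝ n) (i : n) : IsPMF (M i) :=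
  ⟨fun _ => nonneg_of_mem_rowStochastic hM, sum_row_of_mem_rowStochastic hM i⟩

/-- For `δ = 0` (hence `δ₀ = δ₁ = 0`) the convention `x / 0 = 0` makes this the identity. -/
def mergeKernel (δ δ0 δ1 : ℝ) : Matrix (Fin 4) (Fin 4) ℝ :=
  !![1 - (δ - δ0) / δ, (δ - δ0) / δ, 0, 0;
     0, 1, 0, 0;
     0, 0, 1, 0;
     0, 0, (δ - δ1) / δ, 1 - (δ - δ1) / δ]

section Merge
variable {δ δ0 δ1 : ℝ}

lemma mergeKernel_mem_rowStochastic (h0 : 0 ≤ δ0) (h0δ : δ0 ≤ δ) (h1 : 0 ≤ δ1) (h1δ : δ1 ≤ δ) :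
    mergeKernel δ δ0 δ1 ∈ rowStochastic ℝ (Fin 4) := by
  have hδ : 0 ≤ δ := h0.trans h0δ
  have hc0 : (δ - δ0) / δ ≤ 1 := div_le_one_of_le₀ (by linarith) hδ
  have hc1 : (δ - δ1) / δ ≤ 1 := div_le_one_of_le₀ (by linarith) hδ
  rw [mem_rowStochastic_iff_sum]
  refine ⟨fun i j => ?_, fun i => ?_⟩
  · fin_cases i <;> fin_cases j <;>
      simp only [mergeKernel, of_apply, Matrix.cons_val, Fin.reduceFinMk, le_refl, zero_le_one,
        sub_nonneg] <;>
      first | linarith | exact div_nonneg (by linarith) hδ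
  · fin_cases i <;>
      simp only [mergeKernel, Fin.sum_univ_four, add_zero, zero_add, sub_add_cancel,
        add_sub_cancel, of_apply, Matrix.cons_val, Fin.reduceFinMk]

variable (ε : ℝ)

lemma Mtilde_false_vecMul_mergeKernel (h0 : 0 ≤ δ0) (h0δ : δ0 ≤ δ) :
    Mtilde ε δ false ᵥ* mergeKernel δ δ0 δ1 =
      ![δ0, (1 - δ0) - (1 - δ) / (1 + Real.exp ε), (1 - δ) / (1 + Real.exp ε), 0] := by
  have hc : δ * ((δ - δ0) / δ) = δ - δ0 := mul_div_cancel_of_imp' fun h => by linarith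
  have : 1 + Real.exp ε ≠ 0 := by positivity
  ext j
  fin_cases j <;>
    simp only [vecMul, dotProduct, Mtilde, mergeKernel, Fin.sum_univ_four, of_apply,
      Matrix.cons_val, Fin.reduceFinMk, mul_sub, hc, sub_sub_cancel, zero_mul, sub_zero, mul_zero,
      mul_one, zero_add, add_zero]
  field_simp
  ring

lemma Mtilde_true_vecMul_mergeKernel (h1 : 0 ≤ δ1) (h1δ : δ1 ≤ δ) :
    Mtilde ε δ true ᵥ* mergeKernel δ δ0 δ1 =
      ![0, (1 - δ) / (1 + Real.exp ε), (1 - δ1) - (1 - δ) / (1 + Real.exp ε), δ1] := by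
  have hc : δ * ((δ - δ1) / δ) = δ - δ1 := mul_div_cancel_of_imp' fun h => by linarith
  have : 1 + Real.exp ε ≠ 0 := by positivity
  ext j
  fin_cases j <;>
    simp only [vecMul, dotProduct, Mtilde, mergeKernel, Fin.sum_univ_four, of_apply,
      Matrix.cons_val, Fin.reduceFinMk, mul_sub, hc, sub_sub_cancel, zero_mul, sub_zero, mul_zero,
      mul_one, zero_add, add_zero]
  field_simp
  ring

end Merge

lemma Mgen_false_eq (ε δ0 δ1 : ℝ) : Mgen ε δ0 δ1 false =
    ![δ0, Real.exp ε * mgenWeight (Real.exp ε) (1 - δ0) (1 - δ1),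
      mgenWeight (Real.exp ε) (1 - δ1) (1 - δ0), 0] := by
  rw [Mgen, two_mul, Real.exp_add, mgenWeight, mgenWeight, mul_div_assoc', ← sq]
  congr 2
  ring

lemma Mgen_true_eq (ε δ0 δ1 : ℝ) : Mgen ε δ0 δ1 true =
    ![0, mgenWeight (Real.exp ε) (1 - δ0) (1 - δ1),
      Real.exp ε * mgenWeight (Real.exp ε) (1 - δ1) (1 - δ0), δ1] := by
  rw [Mgen, two_mul, Real.exp_add, mgenWeight, mgenWeight, mul_div_assoc', ← sq]
  congr 3
  ring

end

/-- Lemma 3.5 of Murtagh–Vadhan: if `exp(ε)·(1−δ₀) ≥ 1−δ₁`, `exp(ε)·(1−δ₁) ≥ 1−δ₀`,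
and `δ₀, δ₁ ≤ δ`, then `M̃_{(ε,δ₀,δ₁)}(b)` can be obtained from `M̃_{(ε,δ)}(b)` by
post-processing with a kernel `T'' : {0,1,2,3} → PMF({0,1,2,3})`, for both `b = 0, 1`. -/
theorem simulate_Mgen_from_Mtilde (ε δ0 δ1 δ : ℝ) (hε : 0 < ε)
    (h0 : 0 ≤ δ0 ∧ δ0 < 1) (h1 : 0 ≤ δ1 ∧ δ1 < 1) (hδ : 0 ≤ δ ∧ δ < 1)
    (ha : Real.exp ε * (1 - δ0) ≥ 1 - δ1) (hb : Real.exp ε * (1 - δ1) ≥ 1 - δ0)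
    (h0δ : δ0 ≤ δ) (h1δ : δ1 ≤ δ) :
    ∃ T'' : Fin 4 → Fin 4 → ℝ,
      (∀ x, IsPMF (T'' x)) ∧
      (∀ y, ∑ x, Mtilde ε δ false x * T'' x y = Mgen ε δ0 δ1 false y) ∧
      (∀ y, ∑ x, Mtilde ε δ true x * T'' x y = Mgen ε δ0 δ1 true y) := by
  have he : 1 < Real.exp ε := Real.one_lt_exp_iff.mpr hε
  have he' : 1 + Real.exp ε ≠ 0 := by positivity
  have hD : mergedDet (Real.exp ε) (1 - δ) (1 - δ0) (1 - δ1) ≠ 0 :=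
    (mergedDet_pos he (by linarith) (by linarith) (by linarith)).ne'
  have hT : mergeKernel δ δ0 δ1 * middleKernel (Real.exp ε) (1 - δ) (1 - δ0) (1 - δ1) ∈
      rowStochastic ℝ (Fin 4) := mul_mem (mergeKernel_mem_rowStochastic h0.1 h0δ h1.1 h1δ)
    (middleKernel_mem_rowStochastic he (by linarith) (by linarith) (by linarith) ha hb)
  refine ⟨_, isPMF_of_mem_rowStochastic hT, fun y => ?_, fun y => ?_⟩
  · change (Mtilde ε δ false ᵥ* _) y = _
    rw [← vecMul_vecMul, Mtilde_false_vecMul_mergeKernel ε h0.1 h0δ,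
      vecMul_middleKernel_false he' hD, Mgen_false_eq]
  · change (Mtilde ε δ true ᵥ* _) y = _
    rw [← vecMul_vecMul, Mtilde_true_vecMul_mergeKernel ε h1.1 h1δ,
      vecMul_middleKernel_true he' hD, Mgen_true_eq]
end

section
/- Let k be a positive integer, ε₁,…,ε_k ≥ 0 real, δ₁,…,δ_k ∈ [0,1), ε_g ≥ 0, and δ_g ∈ [0,1). Suppose the product distributions ⊗_{i=1}^k M̃_{(ε_i,δ_i)}(0) and ⊗_{i=1}^k M̃_{(ε_i,δ_i)}(1) on {0,1,2,3}^k are (ε_g,δ_g)-indistinguishable. Then for every family of finite types R₁,…,R_k and every family of pairs of probability mass functions P_i⁰, P_i¹ on R_i such that P_i⁰ and P_i¹ are (ε_i,δ_i)-indistinguishable for each i, the product distributions ⊗_{i=1}^k P_i⁰ and ⊗_{i=1}^k P_i¹ on R₁×…×R_k are (ε_g,δ_g)-indistinguishable. -/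
open Finset

lemma Indist.symm' {R : Type*} [Fintype R] {ε δ : ℝ} {P0 P1 : R → ℝ}
    (h : Indist ε δ P0 P1) : Indist ε δ P1 P0 := fun S => ⟨(h S).2, (h S).1⟩

lemma Mtilde_nonneg {ε δ : ℝ} (hε : 0 ≤ ε) (hδ0 : 0 ≤ δ) (hδ1 : δ ≤ 1) (b : Bool) (j : Fin 4) :
    0 ≤ Mtilde ε δ b j := by
  have h1 : 0 < 1 + Real.exp ε := by positivity
  have h2 : (0:ℝ) ≤ 1 - δ := by linarith
  have h3 : 0 < Real.exp ε := Real.exp_pos ε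
  have e1 : 0 ≤ (1 - δ) * Real.exp ε / (1 + Real.exp ε) :=
    div_nonneg (mul_nonneg h2 h3.le) h1.le
  have e2 : 0 ≤ (1 - δ) / (1 + Real.exp ε) := div_nonneg h2 h1.le
  cases b <;> fin_cases j <;> simp [Mtilde] <;> linarith

lemma trunc_sum_le {R : Type*} [Fintype R] {ε δ : ℝ} {P0 P1 : R → ℝ}
    (h : ∀ S : Finset R, ∑ r ∈ S, P0 r ≤ Real.exp ε * ∑ r ∈ S, P1 r + δ) :
    ∑ r, max 0 (P0 r - Real.exp ε * P1 r) ≤ δ := by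
  classical
  set a := Real.exp ε with ha
  set S := univ.filter (fun r => 0 < P0 r - a * P1 r) with hS
  have key : ∑ r, max 0 (P0 r - a * P1 r) = ∑ r ∈ S, (P0 r - a * P1 r) := by
    rw [hS, Finset.sum_filter]
    apply Finset.sum_congr rfl
    intro r _
    split_ifs with hr
    · exact max_eq_right hr.le
    · exact max_eq_left (by linarith [not_lt.mp hr])
  rw [key, Finset.sum_sub_distrib, ← Finset.mul_sum]
  linarith [h S]

lemma trunc_ratio {a x y : ℝ} (ha : 1 ≤ a) (hx : 0 ≤ x) (hy : 0 ≤ y) :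
    y - max 0 (y - a * x) ≤ a * (x - max 0 (x - a * y)) := by
  rcases le_or_gt (y - a * x) 0 with h1 | h1 <;> rcases le_or_gt (x - a * y) 0 with h2 | h2
  · rw [max_eq_left h1, max_eq_left h2]; linarith
  · rw [max_eq_left h1, max_eq_right h2.le]
    have t1 : y ≤ a * y := le_mul_of_one_le_left hy ha
    have t2 : a * y ≤ a * (a * y) :=
      le_mul_of_one_le_left (mul_nonneg (by linarith) hy) ha
    nlinarith
  · rw [max_eq_right h1.le, max_eq_left h2]; nlinarith
  · exfalso; nlinarith

lemma enlarge {R : Type*} [Fintype R] {a : ℝ} (ha : 1 ≤ a) {P Q φ ψ : R → ℝ}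
    (hPs : ∑ r, P r = 1) (hQs : ∑ r, Q r = 1)
    (hφ0 : ∀ r, 0 ≤ φ r) (hψ0 : ∀ r, 0 ≤ ψ r)
    (hφP : ∀ r, φ r ≤ P r) (hψQ : ∀ r, ψ r ≤ Q r)
    (hr1 : ∀ r, Q r - ψ r ≤ a * (P r - φ r)) (hr2 : ∀ r, P r - φ r ≤ a * (Q r - ψ r))
    (hm : ∑ r, ψ r ≤ ∑ r, φ r) (hm1 : ∑ r, φ r < 1) :
    ∃ ψ' : R → ℝ, (∀ r, 0 ≤ ψ' r) ∧ (∀ r, ψ' r ≤ Q r) ∧ (∑ r, ψ' r = ∑ r, φ r) ∧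
      (∀ r, Q r - ψ' r ≤ a * (P r - φ r)) ∧ (∀ r, P r - φ r ≤ a * (Q r - ψ' r)) := by
  classical
  have ha0 : 0 < a := by linarith
  set F := ∑ r, φ r with hF
  set G := ∑ r, ψ r with hG
  set ub : R → ℝ := fun r => Q r - (P r - φ r) / a with hub_def
  have hub_eq : ∀ r, a * (Q r - ub r) = P r - φ r := by
    intro r; simp only [hub_def]; rw [sub_sub_cancel]; field_simp
  have hψub : ∀ r, ψ r ≤ ub r := by
    intro r
    have h := hr2 r
    have h2 : (P r - φ r) / a ≤ Q r - ψ r := by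
      rw [div_le_iff₀ ha0]; nlinarith
    simp only [hub_def]; linarith
  have hubQ : ∀ r, ub r ≤ Q r := by
    intro r
    have : 0 ≤ (P r - φ r) / a := div_nonneg (by linarith [hφP r]) ha0.le
    simp only [hub_def]; linarith
  have hubs : ∑ r, ub r = 1 - (1 - F) / a := by
    simp only [hub_def]
    rw [Finset.sum_sub_distrib, hQs, ← Finset.sum_div, Finset.sum_sub_distrib, hPs]
  have hubF : F ≤ ∑ r, ub r := by
    have h3 : (1 - F) / a ≤ 1 - F := div_le_self (by linarith) ha
    rw [hubs]; linarith
  by_cases hd : ∑ r, ub r = G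
  · have hFG : G = F := le_antisymm hm (by rw [← hd]; exact hubF)
    exact ⟨ψ, hψ0, hψQ, hFG, hr1, hr2⟩
  · have hden : 0 < ∑ r, ub r - G := by
      have h4 : G ≤ ∑ r, ub r := le_trans hm hubF
      rcases lt_or_eq_of_le h4 with h | h
      · linarith
      · exact absurd h.symm hd
    set t := (F - G) / (∑ r, ub r - G) with ht_def
    have ht0 : 0 ≤ t := div_nonneg (by linarith) hden.le
    have ht1 : t ≤ 1 := by
      rw [ht_def, div_le_one hden]; linarith
    refine ⟨fun r => ψ r + t * (ub r - ψ r), ?_, ?_, ?_, ?_, ?_⟩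
    · intro r
      exact add_nonneg (hψ0 r) (mul_nonneg ht0 (by linarith [hψub r]))
    · intro r
      dsimp only
      have h5 : t * (ub r - ψ r) ≤ 1 * (ub r - ψ r) :=
        mul_le_mul_of_nonneg_right ht1 (by linarith [hψub r])
      have := hubQ r
      linarith
    · dsimp only
      have hsum : ∑ r, (ψ r + t * (ub r - ψ r)) = G + t * (∑ r, ub r - G) := by
        rw [Finset.sum_add_distrib, ← Finset.mul_sum, Finset.sum_sub_distrib, ← hG]
      rw [hsum, ht_def, div_mul_cancel₀ _ hden.ne']
      ring
    · intro r
      dsimp only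
      have h6 : 0 ≤ t * (ub r - ψ r) := mul_nonneg ht0 (by linarith [hψub r])
      linarith [hr1 r]
    · intro r
      dsimp only
      have h5 : t * (ub r - ψ r) ≤ 1 * (ub r - ψ r) :=
        mul_le_mul_of_nonneg_right ht1 (by linarith [hψub r])
      have h7 := hub_eq r
      nlinarith [hψub r]

lemma assembly {R : Type*} [Fintype R] (ε δ : ℝ) (hε : 0 ≤ ε) (hδ0 : 0 ≤ δ) (hδ1 : δ < 1)
    {P0 P1 f g : R → ℝ} (h0 : IsPMF P0) (h1 : IsPMF P1)
    (hf0 : ∀ r, 0 ≤ f r) (hg0 : ∀ r, 0 ≤ g r)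
    (hfP : ∀ r, f r ≤ P0 r) (hgP : ∀ r, g r ≤ P1 r)
    {m : ℝ} (hfs : ∑ r, f r = m) (hgs : ∑ r, g r = m) (hmδ : m ≤ δ)
    (hr1 : ∀ r, P1 r - g r ≤ Real.exp ε * (P0 r - f r))
    (hr2 : ∀ r, P0 r - f r ≤ Real.exp ε * (P1 r - g r)) :
    ∃ T : Fin 4 → R → ℝ, (∀ j r, 0 ≤ T j r) ∧ (∀ j, ∑ r, T j r ≤ 1) ∧
      (∀ r, P0 r ≤ ∑ j, Mtilde ε δ false j * T j r) ∧
      (∀ r, ∑ j, Mtilde ε δ true j * T j r ≤ P1 r) := by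
  classical
  set a := Real.exp ε with ha_def
  have ha1 : 1 ≤ a := Real.one_le_exp hε
  have ha0 : 0 < a := Real.exp_pos ε
  have h1a : 0 < 1 + a := by linarith
  have hm0 : 0 ≤ m := by rw [← hfs]; exact Finset.sum_nonneg (fun r _ => hf0 r)
  have hm1 : m < 1 := lt_of_le_of_lt hmδ hδ1
  have h1m : 0 < 1 - m := by linarith
  have hsum0 : ∑ r, (P0 r - f r) = 1 - m := by rw [Finset.sum_sub_distrib, h0.2, hfs]
  have hsum1 : ∑ r, (P1 r - g r) = 1 - m := by rw [Finset.sum_sub_distrib, h1.2, hgs]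
  have hβ1 : (1 - δ) / (1 - m) ≤ 1 := by rw [div_le_one h1m]; linarith
  have hβ0 : 0 ≤ (1 - δ) / (1 - m) := div_nonneg (by linarith) h1m.le
  set T0 : R → ℝ := fun r => ((1 - (1 - δ) / (1 - m)) * (P0 r - f r) + f r) / δ with hT0_def
  have hmz : δ = 0 → m = 0 := fun h => le_antisymm (h ▸ hmδ) hm0
  have hfz : δ = 0 → ∀ r, f r = 0 := by
    intro h r
    have hz : ∑ r, f r = 0 := by rw [hfs, hmz h]
    exact (Finset.sum_eq_zero_iff_of_nonneg (fun r _ => hf0 r)).1 hz r (mem_univ r)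
  have hT0mul : ∀ r, δ * T0 r = (1 - (1 - δ) / (1 - m)) * (P0 r - f r) + f r := by
    intro r
    by_cases hδz : δ = 0
    · simp [hT0_def, hfz hδz r, hmz hδz, hδz]
    · rw [hT0_def]; field_simp
  have hT0nn : ∀ r, 0 ≤ T0 r := fun r =>
    div_nonneg (add_nonneg (mul_nonneg (by linarith) (by linarith [hfP r])) (hf0 r)) hδ0
  have hT0sum : ∑ r, T0 r ≤ 1 := by
    have hnum : ∑ r, ((1 - (1 - δ) / (1 - m)) * (P0 r - f r) + f r) = δ := by
      rw [Finset.sum_add_distrib, ← Finset.mul_sum, hsum0, hfs]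
      field_simp
      ring
    rw [hT0_def]
    simp only
    rw [← Finset.sum_div, hnum]
    by_cases hδz : δ = 0
    · simp [hδz]
    · rw [div_self hδz]
  rcases eq_or_lt_of_le ha1 with haeq | halt
  · -- a = 1
    have heq : ∀ r, P0 r - f r = P1 r - g r := fun r =>
      le_antisymm (by have := hr2 r; rw [← haeq] at this; linarith)
        (by have := hr1 r; rw [← haeq] at this; linarith)
    set T1 : R → ℝ := fun r => (P0 r - f r) / (1 - m) with hT1_def
    have hT1nn : ∀ r, 0 ≤ T1 r := fun r => div_nonneg (by linarith [hfP r]) h1m.le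
    have hT1sum : ∑ r, T1 r ≤ 1 := by
      rw [hT1_def]
      simp only
      rw [← Finset.sum_div, hsum0, div_self h1m.ne']
    refine ⟨![T0, T1, T1, fun _ => 0], ?_, ?_, ?_, ?_⟩
    · intro j r
      fin_cases j
      · exact hT0nn r
      · exact hT1nn r
      · exact hT1nn r
      · exact le_refl 0
    · intro j
      fin_cases j
      · exact hT0sum
      · exact hT1sum
      · exact hT1sum
      · simp
    · intro r
      rw [Fin.sum_univ_four]
      simp only [Mtilde, Matrix.cons_val_zero, Matrix.cons_val_one, Matrix.head_cons,
        Matrix.cons_val_two, Matrix.tail_cons, Matrix.cons_val_three, mul_zero, zero_mul,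
        add_zero]
      rw [← ha_def, ← haeq]
      have hmid : (1 - δ) * 1 / (1 + 1) * T1 r + (1 - δ) / (1 + 1) * T1 r
          = (1 - δ) / (1 - m) * (P0 r - f r) := by
        rw [hT1_def]
        dsimp only
        field_simp
      have hfin : δ * T0 r + (1 - δ) / (1 - m) * (P0 r - f r) = P0 r := by
        rw [hT0mul r]; ring
      linarith [hmid, hfin]
    · intro r
      rw [Fin.sum_univ_four]
      simp only [Mtilde, Matrix.cons_val_zero, Matrix.cons_val_one, Matrix.head_cons,
        Matrix.cons_val_two, Matrix.tail_cons, Matrix.cons_val_three, mul_zero, zero_mul,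
        add_zero, zero_add]
      rw [← ha_def, ← haeq]
      have hmid : (1 - δ) / (1 + 1) * T1 r + (1 - δ) * 1 / (1 + 1) * T1 r
          = (1 - δ) / (1 - m) * (P1 r - g r) := by
        rw [hT1_def]
        dsimp only
        rw [heq r]
        field_simp
      have h5 : (1 - δ) / (1 - m) * (P1 r - g r) ≤ 1 * (P1 r - g r) :=
        mul_le_mul_of_nonneg_right hβ1 (by linarith [hgP r])
      linarith [hg0 r]
  · -- 1 < a
    have hd : 0 < (1 - m) * (a - 1) := mul_pos h1m (by linarith)
    set T1 : R → ℝ := fun r => (a * (P0 r - f r) - (P1 r - g r)) / ((1 - m) * (a - 1))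
      with hT1_def
    set T2 : R → ℝ := fun r => (a * (P1 r - g r) - (P0 r - f r)) / ((1 - m) * (a - 1))
      with hT2_def
    have hT1nn : ∀ r, 0 ≤ T1 r := fun r => div_nonneg (by linarith [hr1 r]) hd.le
    have hT2nn : ∀ r, 0 ≤ T2 r := fun r => div_nonneg (by linarith [hr2 r]) hd.le
    have hT1sum : ∑ r, T1 r ≤ 1 := by
      rw [hT1_def]
      simp only
      rw [← Finset.sum_div, Finset.sum_sub_distrib, ← Finset.mul_sum, hsum0, hsum1]
      rw [div_le_one hd]
      ring_nf
      nlinarith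
    have hT2sum : ∑ r, T2 r ≤ 1 := by
      rw [hT2_def]
      simp only
      rw [← Finset.sum_div, Finset.sum_sub_distrib, ← Finset.mul_sum, hsum0, hsum1]
      rw [div_le_one hd]
      ring_nf
      nlinarith
    refine ⟨![T0, T1, T2, fun _ => 0], ?_, ?_, ?_, ?_⟩
    · intro j r
      fin_cases j
      · exact hT0nn r
      · exact hT1nn r
      · exact hT2nn r
      · exact le_refl 0
    · intro j
      fin_cases j
      · exact hT0sum
      · exact hT1sum
      · exact hT2sum
      · simp
    · intro r
      rw [Fin.sum_univ_four]
      simp only [Mtilde, Matrix.cons_val_zero, Matrix.cons_val_one, Matrix.head_cons,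
        Matrix.cons_val_two, Matrix.tail_cons, Matrix.cons_val_three, mul_zero, zero_mul,
        add_zero]
      rw [← ha_def]
      have hmid : (1 - δ) * a / (1 + a) * T1 r + (1 - δ) / (1 + a) * T2 r
          = (1 - δ) / (1 - m) * (P0 r - f r) := by
        rw [hT1_def, hT2_def]
        dsimp only
        have h2 : a - 1 ≠ 0 := ne_of_gt (by linarith)
        field_simp
        ring
      have hfin : δ * T0 r + (1 - δ) / (1 - m) * (P0 r - f r) = P0 r := by
        rw [hT0mul r]; ring
      linarith [hmid, hfin]
    · intro r
      rw [Fin.sum_univ_four]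
      simp only [Mtilde, Matrix.cons_val_zero, Matrix.cons_val_one, Matrix.head_cons,
        Matrix.cons_val_two, Matrix.tail_cons, Matrix.cons_val_three, mul_zero, zero_mul,
        add_zero, zero_add]
      rw [← ha_def]
      have hmid : (1 - δ) / (1 + a) * T1 r + (1 - δ) * a / (1 + a) * T2 r
          = (1 - δ) / (1 - m) * (P1 r - g r) := by
        rw [hT1_def, hT2_def]
        dsimp only
        have h2 : a - 1 ≠ 0 := ne_of_gt (by linarith)
        field_simp
        ring
      have h5 : (1 - δ) / (1 - m) * (P1 r - g r) ≤ 1 * (P1 r - g r) :=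
        mul_le_mul_of_nonneg_right hβ1 (by linarith [hgP r])
      linarith [hg0 r]

lemma chan {R : Type*} [Fintype R] (ε δ : ℝ) (hε : 0 ≤ ε) (hδ0 : 0 ≤ δ) (hδ1 : δ < 1)
    (P0 P1 : R → ℝ) (h0 : IsPMF P0) (h1 : IsPMF P1) (hind : Indist ε δ P0 P1) :
    ∃ T : Fin 4 → R → ℝ, (∀ j r, 0 ≤ T j r) ∧ (∀ j, ∑ r, T j r ≤ 1) ∧
      (∀ r, P0 r ≤ ∑ j, Mtilde ε δ false j * T j r) ∧
      (∀ r, ∑ j, Mtilde ε δ true j * T j r ≤ P1 r) := by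
  classical
  set a := Real.exp ε with ha_def
  have ha1 : 1 ≤ a := Real.one_le_exp hε
  have ha0 : 0 < a := Real.exp_pos ε
  set f : R → ℝ := fun r => max 0 (P0 r - a * P1 r) with hf_def
  set g : R → ℝ := fun r => max 0 (P1 r - a * P0 r) with hg_def
  have hf0 : ∀ r, 0 ≤ f r := fun r => le_max_left _ _
  have hg0 : ∀ r, 0 ≤ g r := fun r => le_max_left _ _
  have hfP : ∀ r, f r ≤ P0 r := fun r =>
    max_le (h0.1 r) (by nlinarith [mul_nonneg ha0.le (h1.1 r)])
  have hgP : ∀ r, g r ≤ P1 r := fun r =>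
    max_le (h1.1 r) (by nlinarith [mul_nonneg ha0.le (h0.1 r)])
  have hF : ∑ r, f r ≤ δ := trunc_sum_le (fun S => (hind S).1)
  have hG : ∑ r, g r ≤ δ := trunc_sum_le (fun S => (hind S).2)
  have hratio1 : ∀ r, P1 r - g r ≤ a * (P0 r - f r) := fun r =>
    trunc_ratio ha1 (h0.1 r) (h1.1 r)
  have hratio2 : ∀ r, P0 r - f r ≤ a * (P1 r - g r) := fun r =>
    trunc_ratio ha1 (h1.1 r) (h0.1 r)
  rcases le_total (∑ r, g r) (∑ r, f r) with hc | hc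
  · obtain ⟨g', hg'0, hg'Q, hg's, hg'r1, hg'r2⟩ :=
      enlarge ha1 h0.2 h1.2 hf0 hg0 hfP hgP hratio1 hratio2 hc (lt_of_le_of_lt hF hδ1)
    exact assembly ε δ hε hδ0 hδ1 h0 h1 hf0 hg'0 hfP hg'Q rfl hg's hF
      (fun r => hg'r1 r) (fun r => hg'r2 r)
  · obtain ⟨f', hf'0, hf'Q, hf's, hf'r1, hf'r2⟩ :=
      enlarge ha1 h1.2 h0.2 hg0 hf0 hgP hfP hratio2 hratio1 hc (lt_of_le_of_lt hG hδ1)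
    exact assembly ε δ hε hδ0 hδ1 h0 h1 hf'0 hg0 hf'Q hgP hf's rfl hG
      (fun r => hf'r2 r) (fun r => hf'r1 r)

lemma main_aux {k : ℕ} (ε δ : Fin k → ℝ) (hε : ∀ i, 0 ≤ ε i) (hδ : ∀ i, 0 ≤ δ i ∧ δ i < 1)
    (εg δg : ℝ)
    (hhyp1 : ∀ S' : Finset (Fin k → Fin 4),
      ∑ x ∈ S', ∏ i, Mtilde (ε i) (δ i) false (x i) ≤
        Real.exp εg * ∑ x ∈ S', ∏ i, Mtilde (ε i) (δ i) true (x i) + δg)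
    (R : Fin k → Type) [∀ i, Fintype (R i)]
    (A B : ∀ i, R i → ℝ) (hA : ∀ i, IsPMF (A i)) (hB : ∀ i, IsPMF (B i))
    (hind : ∀ i, Indist (ε i) (δ i) (A i) (B i))
    (S : Finset (∀ i, R i)) :
    ∑ r ∈ S, ∏ i, A i (r i) ≤ Real.exp εg * ∑ r ∈ S, ∏ i, B i (r i) + δg := by
  classical
  choose T hT0 hTs hTA hTB using fun i =>
    chan (ε i) (δ i) (hε i) (hδ i).1 (hδ i).2 (A i) (B i) (hA i) (hB i) (hind i)
  set e := Real.exp εg with he_def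
  have he0 : 0 < e := Real.exp_pos εg
  set M0 : (Fin k → Fin 4) → ℝ := fun x => ∏ i, Mtilde (ε i) (δ i) false (x i) with hM0_def
  set M1 : (Fin k → Fin 4) → ℝ := fun x => ∏ i, Mtilde (ε i) (δ i) true (x i) with hM1_def
  have hM0nn : ∀ x, 0 ≤ M0 x := fun x =>
    Finset.prod_nonneg fun i _ => Mtilde_nonneg (hε i) (hδ i).1 (hδ i).2.le false (x i)
  have hM1nn : ∀ x, 0 ≤ M1 x := fun x =>
    Finset.prod_nonneg fun i _ => Mtilde_nonneg (hε i) (hδ i).1 (hδ i).2.le true (x i)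
  set w : (Fin k → Fin 4) → ℝ := fun x => ∑ r ∈ S, ∏ i, T i (x i) (r i) with hw_def
  have hw0 : ∀ x, 0 ≤ w x := fun x =>
    Finset.sum_nonneg fun r _ => Finset.prod_nonneg fun i _ => hT0 i (x i) (r i)
  have hw1 : ∀ x, w x ≤ 1 := by
    intro x
    have h1 : w x ≤ ∑ r : ∀ i, R i, ∏ i, T i (x i) (r i) :=
      Finset.sum_le_sum_of_subset_of_nonneg (Finset.subset_univ S)
        (fun r _ _ => Finset.prod_nonneg fun i _ => hT0 i (x i) (r i))
    have h2 : (∏ i, ∑ y : R i, T i (x i) y) = ∑ r : ∀ i, R i, ∏ i, T i (x i) (r i) := by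
      rw [Finset.prod_univ_sum]
      exact Finset.sum_congr Fintype.piFinset_univ fun _ _ => rfl
    have h3 : (∏ i, ∑ y : R i, T i (x i) y) ≤ 1 :=
      Finset.prod_le_one (fun i _ => Finset.sum_nonneg fun y _ => hT0 i (x i) y)
        (fun i _ => hTs i (x i))
    linarith
  have hexch : ∀ M : ∀ _ : Fin k, Fin 4 → ℝ,
      ∑ x : Fin k → Fin 4, (∏ i, M i (x i)) * w x
        = ∑ r ∈ S, ∏ i, ∑ j : Fin 4, M i j * T i j (r i) := by
    intro M
    simp only [hw_def, Finset.mul_sum]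
    rw [Finset.sum_comm]
    refine Finset.sum_congr rfl fun r _ => ?_
    rw [Finset.prod_univ_sum]
    refine Finset.sum_congr rfl fun x _ => ?_
    rw [Finset.prod_mul_distrib]
  have key1 : ∑ r ∈ S, ∏ i, A i (r i) ≤ ∑ x : Fin k → Fin 4, M0 x * w x := by
    rw [hM0_def]
    simp only
    rw [hexch]
    exact Finset.sum_le_sum fun r _ =>
      Finset.prod_le_prod (fun i _ => (hA i).1 (r i)) (fun i _ => hTA i (r i))
  have key2 : ∑ x : Fin k → Fin 4, M1 x * w x ≤ ∑ r ∈ S, ∏ i, B i (r i) := by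
    rw [hM1_def]
    simp only
    rw [hexch]
    exact Finset.sum_le_sum fun r _ =>
      Finset.prod_le_prod
        (fun i _ => Finset.sum_nonneg fun j _ =>
          mul_nonneg (Mtilde_nonneg (hε i) (hδ i).1 (hδ i).2.le true j) (hT0 i j (r i)))
        (fun i _ => hTB i (r i))
  have key3 : ∑ x : Fin k → Fin 4, M0 x * w x ≤ e * ∑ x : Fin k → Fin 4, M1 x * w x + δg := by
    set Sstar : Finset (Fin k → Fin 4) := univ.filter (fun x => e * M1 x < M0 x) with hSs
    have hh := hhyp1 Sstar
    have hh' : ∑ x ∈ Sstar, M0 x - e * ∑ x ∈ Sstar, M1 x ≤ δg := by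
      rw [hM0_def, hM1_def]; simp only; linarith [hh]
    have hstep : ∑ x : Fin k → Fin 4, w x * (M0 x - e * M1 x)
        ≤ ∑ x ∈ Sstar, (M0 x - e * M1 x) := by
      have h1 : ∑ x : Fin k → Fin 4, w x * (M0 x - e * M1 x)
          ≤ ∑ x : Fin k → Fin 4, (if e * M1 x < M0 x then M0 x - e * M1 x else 0) := by
        refine Finset.sum_le_sum fun x _ => ?_
        by_cases hx : e * M1 x < M0 x
        · rw [if_pos hx]
          nlinarith [hw0 x, hw1 x]
        · rw [if_neg hx]
          have : M0 x - e * M1 x ≤ 0 := by linarith [not_lt.mp hx]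
          exact mul_nonpos_of_nonneg_of_nonpos (hw0 x) this
      have h2 : ∑ x ∈ Sstar, (M0 x - e * M1 x)
          = ∑ x : Fin k → Fin 4, (if e * M1 x < M0 x then M0 x - e * M1 x else 0) := by
        rw [hSs, Finset.sum_filter]
      linarith
    have hsplit : ∑ x : Fin k → Fin 4, w x * (M0 x - e * M1 x)
        = ∑ x : Fin k → Fin 4, M0 x * w x - e * ∑ x : Fin k → Fin 4, M1 x * w x := by
      rw [Finset.mul_sum, ← Finset.sum_sub_distrib]
      exact Finset.sum_congr rfl fun x _ => by ring
    have hsub : ∑ x ∈ Sstar, (M0 x - e * M1 x)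
        = ∑ x ∈ Sstar, M0 x - e * ∑ x ∈ Sstar, M1 x := by
      rw [Finset.mul_sum, ← Finset.sum_sub_distrib]
    linarith [hstep, hsplit ▸ hstep]
  have key4 : e * ∑ x : Fin k → Fin 4, M1 x * w x ≤ e * ∑ r ∈ S, ∏ i, B i (r i) :=
    mul_le_mul_of_nonneg_left key2 he0.le
  linarith [key1, key3, key4]

/-- The nontrivial direction of Lemma 3.6 of Murtagh–Vadhan: if the product of the
mechanisms `M̃_{(ε_i,δ_i)}` is `(ε_g,δ_g)`-indistinguishable, then so is the product of
any family of `(ε_i,δ_i)`-indistinguishable pairs. -/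
theorem reduction_to_Mtilde (k : ℕ) (hk : 0 < k) (ε δ : Fin k → ℝ)
    (hε : ∀ i, 0 ≤ ε i) (hδ : ∀ i, 0 ≤ δ i ∧ δ i < 1)
    (εg δg : ℝ) (hεg : 0 ≤ εg) (hδg : 0 ≤ δg ∧ δg < 1)
    (hhyp : Indist εg δg
      (fun x : Fin k → Fin 4 => ∏ i, Mtilde (ε i) (δ i) false (x i))
      (fun x : Fin k → Fin 4 => ∏ i, Mtilde (ε i) (δ i) true (x i)))
    (R : Fin k → Type) [∀ i, Fintype (R i)]
    (P0 P1 : ∀ i, R i → ℝ)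
    (hP0 : ∀ i, IsPMF (P0 i)) (hP1 : ∀ i, IsPMF (P1 i))
    (hind : ∀ i, Indist (ε i) (δ i) (P0 i) (P1 i)) :
    Indist εg δg (fun r : ∀ i, R i => ∏ i, P0 i (r i))
                 (fun r : ∀ i, R i => ∏ i, P1 i (r i)) := by
  intro S
  constructor
  · exact main_aux ε δ hε hδ εg δg (fun S' => (hhyp S').1) R P0 P1 hP0 hP1 hind S
  · exact main_aux ε δ hε hδ εg δg (fun S' => (hhyp S').1) R P1 P0 hP1 hP0
      (fun i => (hind i).symm') S
end

section
/- Let k be a positive integer, ε₁,…,ε_k ≥ 0 real, δ₁,…,δ_k, δ_g ∈ [0,1), and ε_g ≥ 0 satisfying (1/∏_{i=1}^k (1+exp(ε_i))) · Σ_{S ⊆ {1,…,k}} max(exp(Σ_{i∈S} ε_i) − exp(ε_g)·exp(Σ_{i∉S} ε_i), 0) ≤ 1 − (1−δ_g)/∏_{i=1}^k (1−δ_i). Let Y₁,…,Y_k be finite types, and for each i ∈ {1,…,k} and each b ∈ {0,1} let κ_i^b : Y₁×…×Y_{i−1} → PMF(Y_i) be an adaptively chosen kernel such that for every history h ∈ Y₁×…×Y_{i−1},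 the distributions κ_i^0(h) and κ_i^1(h) are (ε_i,δ_i)-indistinguishable. Let V^b ∈ PMF(Y₁×…×Y_k) be the distribution obtained by sequentially sampling y₁ ∼ κ₁^b, then y₂ ∼ κ₂^b(y₁), …, then y_k ∼ κ_k^b(y₁,…,y_{k−1}). Then V^0 and V^1 are (ε_g,δ_g)-indistinguishable. -/
open Finset

/-- Core scalar inequality behind the single-round canonical domination. -/
lemma dp_scalar (ε δ s t x0 x1 : ℝ) (hε : 0 ≤ ε) (hδ : 0 ≤ δ) (hδ1 : δ ≤ 1)
    (hs : 0 ≤ s) (ht : 0 ≤ t)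
    (hx0 : 0 ≤ x0) (hx0' : x0 ≤ 1) (hx1 : 0 ≤ x1) (hx1' : x1 ≤ 1)
    (hA : x0 ≤ Real.exp ε * x1 + δ) (hB : 1 - x1 ≤ Real.exp ε * (1 - x0) + δ) :
    s * x0 - t * x1 ≤ s * δ +
      (1 - δ) / (1 + Real.exp ε) * (max (s * Real.exp ε - t) 0 + max (s - t * Real.exp ε) 0) := by
  set E := Real.exp ε with hE
  have hE1 : 1 ≤ E := by
    rw [hE]; simpa using Real.one_le_exp_iff.mpr hε
  have hEpos : (0:ℝ) < 1 + E := by linarith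
  rcases le_or_gt (s * E) t with h1 | h1
  · -- t ≥ s*E : bound by s*δ
    have hm : 0 ≤ (1 - δ) / (1 + E) * (max (s * E - t) 0 + max (s - t * E) 0) := by
      apply mul_nonneg (div_nonneg (by linarith) hEpos.le)
      exact add_nonneg (le_max_right _ _) (le_max_right _ _)
    nlinarith [mul_nonneg hs hx1, mul_nonneg (sub_nonneg.2 h1) hx1]
  · rcases le_or_gt (t * E) s with h2 | h2
    · -- s ≥ t*E
      have hm1 : max (s * E - t) 0 = s * E - t := max_eq_left (by nlinarith)
      have hm2 : max (s - t * E) 0 = s - t * E := max_eq_left (by linarith)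
      rw [hm1, hm2]
      have hrw : (1 - δ) / (1 + E) * (s * E - t + (s - t * E)) = (1 - δ) * (s - t) := by
        field_simp; ring
      rw [hrw]
      nlinarith [mul_nonneg (sub_nonneg.2 h2) (sub_nonneg.2 hx0'), mul_nonneg ht
        (sub_nonneg.2 hB)]
    · -- middle case: t < s*E and s < t*E, so E > 1
      have hm2 : max (s - t * E) 0 = 0 := max_eq_right (by linarith)
      have hm1 : max (s * E - t) 0 = s * E - t := max_eq_left (by linarith)
      rw [hm1, hm2, add_zero, div_mul_eq_mul_div, ← sub_le_iff_le_add', le_div_iff₀ hEpos]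
      nlinarith [mul_nonneg (sub_nonneg.2 h2.le) (sub_nonneg.2 hA),
        mul_nonneg (sub_nonneg.2 h1.le) (by nlinarith : (0:ℝ) ≤ E * (1 - x0) + δ - (1 - x1))]



/-- Single-round domination by the canonical pair, two-parameter hockey-stick form. -/
lemma hs_le {R : Type*} [Fintype R] (ε δ : ℝ) (hε : 0 ≤ ε) (hδ : 0 ≤ δ) (hδ1 : δ ≤ 1)
    (P0 P1 : R → ℝ) (h0 : IsPMF P0) (h1 : IsPMF P1) (hind : Indist ε δ P0 P1)
    (s t : ℝ) (hs : 0 ≤ s) (ht : 0 ≤ t) :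
    ∑ r, max (s * P0 r - t * P1 r) 0 ≤ s * δ +
      (1 - δ) / (1 + Real.exp ε) * (max (s * Real.exp ε - t) 0 + max (s - t * Real.exp ε) 0) := by
  classical
  set A : Finset R := univ.filter (fun r => 0 < s * P0 r - t * P1 r) with hA
  have hsum : ∑ r, max (s * P0 r - t * P1 r) 0
      = s * ∑ r ∈ A, P0 r - t * ∑ r ∈ A, P1 r := by
    rw [← Finset.sum_filter_add_sum_filter_not univ (fun r => 0 < s * P0 r - t * P1 r)]
    have e1 : ∑ r ∈ A, max (s * P0 r - t * P1 r) 0 = ∑ r ∈ A, (s * P0 r - t * P1 r) := by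
      apply Finset.sum_congr rfl
      intro r hr
      exact max_eq_left (le_of_lt (Finset.mem_filter.mp hr).2)
    have e2 : ∑ r ∈ univ.filter (fun r => ¬ 0 < s * P0 r - t * P1 r),
        max (s * P0 r - t * P1 r) 0 = 0 := by
      apply Finset.sum_eq_zero
      intro r hr
      exact max_eq_right (le_of_not_gt (Finset.mem_filter.mp hr).2)
    rw [e1, e2, add_zero, Finset.sum_sub_distrib, Finset.mul_sum, Finset.mul_sum]
  rw [hsum]
  set x0 := ∑ r ∈ A, P0 r with hx0def
  set x1 := ∑ r ∈ A, P1 r with hx1def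
  have hx0 : 0 ≤ x0 := Finset.sum_nonneg fun r _ => h0.1 r
  have hx1 : 0 ≤ x1 := Finset.sum_nonneg fun r _ => h1.1 r
  have hx0' : x0 ≤ 1 := by
    rw [← h0.2]; exact Finset.sum_le_univ_sum_of_nonneg fun r => h0.1 r
  have hx1' : x1 ≤ 1 := by
    rw [← h1.2]; exact Finset.sum_le_univ_sum_of_nonneg fun r => h1.1 r
  have hcompl0 : ∑ r ∈ Aᶜ, P0 r = 1 - x0 := by
    have := Finset.sum_add_sum_compl A P0
    rw [h0.2] at this; linarith
  have hcompl1 : ∑ r ∈ Aᶜ, P1 r = 1 - x1 := by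
    have := Finset.sum_add_sum_compl A P1
    rw [h1.2] at this; linarith
  have hA1 : x0 ≤ Real.exp ε * x1 + δ := (hind A).1
  have hB1 : 1 - x1 ≤ Real.exp ε * (1 - x0) + δ := by
    have := (hind Aᶜ).2
    rw [hcompl0, hcompl1] at this; exact this
  exact dp_scalar ε δ s t x0 x1 hε hδ hδ1 hs ht hx0 hx0' hx1 hx1' hA1 hB1

lemma mem_map_succ {k : ℕ} (S : Finset (Fin k)) (j : Fin k) :
    j.succ ∈ S.map (Fin.succEmb k) ↔ j ∈ S := by
  rw [Finset.mem_map]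
  constructor
  · rintro ⟨b, hb, hb2⟩
    rw [Fin.coe_succEmb] at hb2
    rwa [← Fin.succ_injective k hb2]
  · intro hj
    exact ⟨j, hj, rfl⟩

lemma zero_not_mem_map_succ {k : ℕ} (S : Finset (Fin k)) :
    (0 : Fin (k+1)) ∉ S.map (Fin.succEmb k) := by
  rw [Finset.mem_map]
  rintro ⟨b, _, hb⟩
  rw [Fin.coe_succEmb] at hb
  exact Fin.succ_ne_zero b hb

lemma map_preimage_succ {k : ℕ} (T : Finset (Fin (k+1))) (hT : T ⊆ univ.map (Fin.succEmb k)) :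
    (T.preimage Fin.succ ((Fin.succ_injective k).injOn)).map (Fin.succEmb k) = T := by
  ext a
  constructor
  · intro ha
    obtain ⟨b, hb, hb2⟩ := Finset.mem_map.mp ha
    rw [Fin.coe_succEmb] at hb2
    rw [← hb2]
    exact Finset.mem_preimage.mp hb
  · intro ha
    obtain ⟨b, _, hb2⟩ := Finset.mem_map.mp (hT ha)
    rw [Fin.coe_succEmb] at hb2
    subst hb2
    exact Finset.mem_map.mpr ⟨b, Finset.mem_preimage.mpr ha, rfl⟩

lemma univ_fin_succ (k : ℕ) :
    (univ : Finset (Fin (k+1))) = insert 0 ((univ : Finset (Fin k)).map (Fin.succEmb k)) := by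
  ext i
  induction i using Fin.cases with
  | zero => simp
  | succ j =>
      rw [Finset.mem_insert, mem_map_succ]
      simp

lemma sum_finset_fin_succ {M : Type*} [AddCommMonoid M] (k : ℕ) (f : Finset (Fin (k+1)) → M) :
    ∑ S : Finset (Fin (k+1)), f S
      = ∑ S : Finset (Fin k), (f (S.map (Fin.succEmb k)) + f (insert 0 (S.map (Fin.succEmb k)))) := by
  classical
  have key : ∀ g : Finset (Fin (k+1)) → M,
      ∑ T ∈ ((univ : Finset (Fin k)).map (Fin.succEmb k)).powerset, g T
        = ∑ S : Finset (Fin k), g (S.map (Fin.succEmb k)) := by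
    intro g
    refine Finset.sum_bij' (fun T _ => T.preimage Fin.succ ((Fin.succ_injective k).injOn))
      (fun S _ => S.map (Fin.succEmb k)) ?_ ?_ ?_ ?_ ?_
    · intro T hT; exact Finset.mem_univ _
    · intro S _
      rw [Finset.mem_powerset]
      exact Finset.map_subset_map.mpr (Finset.subset_univ S)
    · intro T hT
      exact map_preimage_succ T (Finset.mem_powerset.mp hT)
    · intro S _
      exact Finset.preimage_map _ _
    · intro T hT
      rw [map_preimage_succ T (Finset.mem_powerset.mp hT)]
  rw [← Finset.powerset_univ, univ_fin_succ,
    Finset.sum_powerset_insert (zero_not_mem_map_succ univ), key f,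
    key (fun T => f (insert 0 T)), ← Finset.sum_add_distrib]

lemma compl_map_succ {k : ℕ} (S : Finset (Fin k)) :
    (S.map (Fin.succEmb k))ᶜ = insert 0 (Sᶜ.map (Fin.succEmb k)) := by
  ext i
  induction i using Fin.cases with
  | zero =>
      simp only [Finset.mem_compl, Finset.mem_insert]
      exact ⟨fun _ => Or.inl (by trivial), fun _ => zero_not_mem_map_succ S⟩
  | succ j =>
      rw [Finset.mem_compl, mem_map_succ, Finset.mem_insert, mem_map_succ, Finset.mem_compl]
      constructor
      · intro h; exact Or.inr h
      · rintro (h | h)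
        · exact absurd h (Fin.succ_ne_zero j)
        · exact h

lemma compl_insert_zero_map_succ {k : ℕ} (S : Finset (Fin k)) :
    (insert (0 : Fin (k+1)) (S.map (Fin.succEmb k)))ᶜ = Sᶜ.map (Fin.succEmb k) := by
  rw [Finset.compl_insert, compl_map_succ]
  exact Finset.erase_insert (zero_not_mem_map_succ Sᶜ)

lemma sum_exp_subsets (k : ℕ) (ε : Fin k → ℝ) :
    ∑ S : Finset (Fin k), Real.exp (∑ i ∈ S, ε i) = ∏ i, (1 + Real.exp (ε i)) := by
  classical
  have h := Finset.prod_add (fun i => Real.exp (ε i)) (fun _ => (1:ℝ)) (univ : Finset (Fin k))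
  simp only [Finset.prod_const_one, mul_one] at h
  have h2 : ∏ i, (1 + Real.exp (ε i)) = ∏ i, (Real.exp (ε i) + 1) := by
    apply Finset.prod_congr rfl; intro i _; ring
  rw [h2, h, Finset.powerset_univ]
  apply Finset.sum_congr rfl
  intro S _
  rw [Real.exp_sum]


lemma max0_congr {a b : ℝ} (h : a = b) : max a 0 = max b 0 := by rw [h]

lemma main_bound (k : ℕ) :
    ∀ (ε δ : Fin k → ℝ), (∀ i, 0 ≤ ε i) → (∀ i, 0 ≤ δ i ∧ δ i < 1) →
    ∀ (Y : Fin k → Type) [inst : ∀ i, Fintype (Y i)]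
      (κ : Bool → ∀ i : Fin k, (∀ j, Y j) → Y i → ℝ),
      (∀ b i (h h' : ∀ j, Y j), (∀ j, j < i → h j = h' j) → κ b i h = κ b i h') →
      (∀ b i h, IsPMF (κ b i h)) →
      (∀ i (h : ∀ j, Y j), Indist (ε i) (δ i) (κ false i h) (κ true i h)) →
      ∀ s t : ℝ, 0 ≤ s → 0 ≤ t →
      ∑ y : ∀ i, Y i, max (s * ∏ i, κ false i y (y i) - t * ∏ i, κ true i y (y i)) 0 ≤
        s * (1 - ∏ i, (1 - δ i)) + (∏ i, (1 - δ i)) / (∏ i, (1 + Real.exp (ε i))) *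
          ∑ S : Finset (Fin k),
            max (s * Real.exp (∑ i ∈ S, ε i) - t * Real.exp (∑ i ∈ Sᶜ, ε i)) 0 := by
  induction k with
  | zero =>
      intro ε δ hε hδ Y inst κ hpre hker hind s t hs ht
      simp only [Fin.prod_univ_zero, mul_one]
      rw [Fintype.sum_unique, Fintype.sum_unique,
        show (default : Finset (Fin 0)) = ∅ from Finset.eq_empty_of_isEmpty _]
      simp
  | succ k ih =>
      intro ε δ hε hδ Y inst κ hprefix hker hind s t hs ht
      rcases isEmpty_or_nonempty (∀ i, Y i) with hemp | hne
      · haveI := hemp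
        rw [Finset.univ_eq_empty, Finset.sum_empty]
        have h1 : 0 ≤ s * (1 - ∏ i, (1 - δ i)) := by
          apply mul_nonneg hs
          rw [sub_nonneg]
          apply Finset.prod_le_one
          · intro i _; linarith [(hδ i).2]
          · intro i _; linarith [(hδ i).1]
        have h2 : 0 ≤ (∏ i, (1 - δ i)) / (∏ i, (1 + Real.exp (ε i))) *
            ∑ S : Finset (Fin (k+1)),
              max (s * Real.exp (∑ i ∈ S, ε i) - t * Real.exp (∑ i ∈ Sᶜ, ε i)) 0 := by
        
          apply mul_nonneg
          · apply div_nonneg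
            · exact Finset.prod_nonneg fun i _ => by linarith [(hδ i).1, (hδ i).2]
            · exact Finset.prod_nonneg fun i _ => by positivity
          · exact Finset.sum_nonneg fun S _ => le_max_right _ _
        linarith
      · obtain ⟨h₀⟩ := hne
        have hμpmf : ∀ b, IsPMF (κ b 0 h₀) := fun b => hker b 0 h₀
        have hμind : Indist (ε 0) (δ 0) (κ false 0 h₀) (κ true 0 h₀) := hind 0 h₀
        have hκ0 : ∀ b (y : ∀ i, Y i), κ b 0 y = κ b 0 h₀ :=
          fun b y => hprefix b 0 y h₀ (fun j hj => absurd hj (Fin.not_lt_zero j))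
        have hP'pos : (0:ℝ) < ∏ jj : Fin k, (1 - δ jj.succ) :=
          Finset.prod_pos fun jj _ => by linarith [(hδ jj.succ).2]
        have hQ'pos : (0:ℝ) < ∏ jj : Fin k, (1 + Real.exp (ε jj.succ)) :=
          Finset.prod_pos fun jj _ => by positivity
        have hE0pos : (0:ℝ) < 1 + Real.exp (ε 0) := by positivity
        -- instantiate the inductive hypothesis for each fixed first output
        have ihy : ∀ y₀ : Y 0,
            ∑ y' : ∀ jj : Fin k, Y jj.succ,
              max ((s * κ false 0 h₀ y₀) *
                    ∏ jj, κ false jj.succ (Fin.cons y₀ y') (y' jj)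
                 - (t * κ true 0 h₀ y₀) *
                    ∏ jj, κ true jj.succ (Fin.cons y₀ y') (y' jj)) 0
            ≤ (s * κ false 0 h₀ y₀) * (1 - ∏ jj : Fin k, (1 - δ jj.succ))
              + (∏ jj : Fin k, (1 - δ jj.succ)) / (∏ jj : Fin k, (1 + Real.exp (ε jj.succ))) *
                ∑ S : Finset (Fin k),
                  max ((s * κ false 0 h₀ y₀) * Real.exp (∑ jj ∈ S, ε jj.succ)
                     - (t * κ true 0 h₀ y₀) * Real.exp (∑ jj ∈ Sᶜ, ε jj.succ)) 0 := by
          intro y₀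
          refine ih (fun jj => ε jj.succ) (fun jj => δ jj.succ) (fun jj => hε jj.succ)
            (fun jj => hδ jj.succ) (fun jj => Y jj.succ) (inst := fun jj => inst jj.succ)
            (fun b jj h => κ b jj.succ (Fin.cons y₀ h)) ?_ ?_ ?_
            (s * κ false 0 h₀ y₀) (t * κ true 0 h₀ y₀)
            (mul_nonneg hs ((hμpmf false).1 y₀)) (mul_nonneg ht ((hμpmf true).1 y₀))
          · intro b jj h h' hagree
            apply hprefix b jj.succ
            intro i hi
            induction i using Fin.cases with
            | zero => rw [Fin.cons_zero, Fin.cons_zero]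
            | succ m =>
                rw [Fin.cons_succ, Fin.cons_succ]
                exact hagree m (Fin.succ_lt_succ_iff.mp hi)
          · intro b jj h
            exact hker b jj.succ (Fin.cons y₀ h)
          · intro jj h
            exact hind jj.succ (Fin.cons y₀ h)
        calc
          ∑ y : ∀ i : Fin (k+1), Y i,
              max (s * ∏ i, κ false i y (y i) - t * ∏ i, κ true i y (y i)) 0
            = ∑ p : Y 0 × (∀ jj : Fin k, Y jj.succ),
                max (s * ∏ i, κ false i (Fin.consEquiv Y p) (Fin.consEquiv Y p i)
                   - t * ∏ i, κ true i (Fin.consEquiv Y p) (Fin.consEquiv Y p i)) 0 :=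
              (Equiv.sum_comp (Fin.consEquiv Y)
                (fun y => max (s * ∏ i, κ false i y (y i) - t * ∏ i, κ true i y (y i)) 0)).symm
          _ = ∑ y₀ : Y 0, ∑ y' : ∀ jj : Fin k, Y jj.succ,
                max ((s * κ false 0 h₀ y₀) * ∏ jj, κ false jj.succ (Fin.cons y₀ y') (y' jj)
                   - (t * κ true 0 h₀ y₀) * ∏ jj, κ true jj.succ (Fin.cons y₀ y') (y' jj)) 0 := by
              rw [Fintype.sum_prod_type]
              refine Finset.sum_congr rfl fun y₀ _ => Finset.sum_congr rfl fun y' _ => max0_congr ?_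
              have hc : Fin.consEquiv Y (y₀, y') = Fin.cons y₀ y' := rfl
              rw [hc]
              have hp : ∀ b, ∏ i, κ b i (Fin.cons y₀ y') (Fin.cons y₀ y' i)
                  = κ b 0 h₀ y₀ * ∏ jj, κ b jj.succ (Fin.cons y₀ y') (y' jj) := by
                intro b
                rw [Fin.prod_univ_succ]
                simp only [Fin.cons_zero, Fin.cons_succ]
                rw [hκ0 b (Fin.cons y₀ y')]
              rw [hp false, hp true]; ring
          _ ≤ ∑ y₀ : Y 0,
                ((s * κ false 0 h₀ y₀) * (1 - ∏ jj : Fin k, (1 - δ jj.succ))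
                  + (∏ jj : Fin k, (1 - δ jj.succ)) / (∏ jj : Fin k, (1 + Real.exp (ε jj.succ))) *
                    ∑ S : Finset (Fin k),
                      max ((s * κ false 0 h₀ y₀) * Real.exp (∑ jj ∈ S, ε jj.succ)
                         - (t * κ true 0 h₀ y₀) * Real.exp (∑ jj ∈ Sᶜ, ε jj.succ)) 0) :=
              Finset.sum_le_sum fun y₀ _ => ihy y₀
          _ = s * (1 - ∏ jj : Fin k, (1 - δ jj.succ))
              + (∏ jj : Fin k, (1 - δ jj.succ)) / (∏ jj : Fin k, (1 + Real.exp (ε jj.succ))) *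
                ∑ S : Finset (Fin k), ∑ y₀ : Y 0,
                  max ((s * Real.exp (∑ jj ∈ S, ε jj.succ)) * κ false 0 h₀ y₀
                     - (t * Real.exp (∑ jj ∈ Sᶜ, ε jj.succ)) * κ true 0 h₀ y₀) 0 := by
              rw [Finset.sum_add_distrib]
              congr 1
              · have : ∑ y₀ : Y 0, (s * κ false 0 h₀ y₀) * (1 - ∏ jj : Fin k, (1 - δ jj.succ))
                    = (∑ y₀ : Y 0, κ false 0 h₀ y₀) * (s * (1 - ∏ jj : Fin k, (1 - δ jj.succ))) := by
                  rw [Finset.sum_mul]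
                  exact Finset.sum_congr rfl fun y₀ _ => by ring
                rw [this, (hμpmf false).2, one_mul]
              · rw [← Finset.mul_sum]
                congr 1
                rw [Finset.sum_comm]
                exact Finset.sum_congr rfl fun S _ =>
                  Finset.sum_congr rfl fun y₀ _ => max0_congr (by ring)
          _ ≤ s * (1 - ∏ jj : Fin k, (1 - δ jj.succ))
              + (∏ jj : Fin k, (1 - δ jj.succ)) / (∏ jj : Fin k, (1 + Real.exp (ε jj.succ))) *
                ∑ S : Finset (Fin k),
                  ((s * Real.exp (∑ jj ∈ S, ε jj.succ)) * δ 0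
                    + (1 - δ 0) / (1 + Real.exp (ε 0)) *
                      (max ((s * Real.exp (∑ jj ∈ S, ε jj.succ)) * Real.exp (ε 0)
                          - t * Real.exp (∑ jj ∈ Sᶜ, ε jj.succ)) 0
                       + max (s * Real.exp (∑ jj ∈ S, ε jj.succ)
                          - (t * Real.exp (∑ jj ∈ Sᶜ, ε jj.succ)) * Real.exp (ε 0)) 0)) := by
              refine add_le_add le_rfl (mul_le_mul_of_nonneg_left
                (Finset.sum_le_sum fun S _ => ?_) (by positivity))
              exact hs_le (ε 0) (δ 0) (hε 0) (hδ 0).1 (hδ 0).2.le _ _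
                (hμpmf false) (hμpmf true) hμind _ _
                (mul_nonneg hs (Real.exp_pos _).le) (mul_nonneg ht (Real.exp_pos _).le)
          _ = s * (1 - ∏ i : Fin (k+1), (1 - δ i))
              + (∏ i : Fin (k+1), (1 - δ i)) / (∏ i : Fin (k+1), (1 + Real.exp (ε i))) *
                ∑ S : Finset (Fin (k+1)),
                  max (s * Real.exp (∑ i ∈ S, ε i) - t * Real.exp (∑ i ∈ Sᶜ, ε i)) 0 := by
              have hbig : ∑ S' : Finset (Fin (k+1)),
                  max (s * Real.exp (∑ i ∈ S', ε i) - t * Real.exp (∑ i ∈ S'ᶜ, ε i)) 0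
                = ∑ S : Finset (Fin k),
                    (max (s * Real.exp (∑ jj ∈ S, ε jj.succ)
                        - (t * Real.exp (∑ jj ∈ Sᶜ, ε jj.succ)) * Real.exp (ε 0)) 0
                     + max ((s * Real.exp (∑ jj ∈ S, ε jj.succ)) * Real.exp (ε 0)
                        - t * Real.exp (∑ jj ∈ Sᶜ, ε jj.succ)) 0) := by
                rw [sum_finset_fin_succ]
                refine Finset.sum_congr rfl fun S _ => ?_
                congr 1
                · refine max0_congr ?_
                  rw [Finset.sum_map, compl_map_succ,
                    Finset.sum_insert (zero_not_mem_map_succ Sᶜ), Finset.sum_map, Real.exp_add]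
                  simp only [Fin.coe_succEmb]
                  ring
                · refine max0_congr ?_
                  rw [Finset.sum_insert (zero_not_mem_map_succ S), Finset.sum_map,
                    compl_insert_zero_map_succ, Finset.sum_map, Real.exp_add]
                  simp only [Fin.coe_succEmb]
                  ring
              have hsum1 : ∑ S : Finset (Fin k),
                    ((s * Real.exp (∑ jj ∈ S, ε jj.succ)) * δ 0
                      + (1 - δ 0) / (1 + Real.exp (ε 0)) *
                        (max ((s * Real.exp (∑ jj ∈ S, ε jj.succ)) * Real.exp (ε 0)
                            - t * Real.exp (∑ jj ∈ Sᶜ, ε jj.succ)) 0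
                         + max (s * Real.exp (∑ jj ∈ S, ε jj.succ)
                            - (t * Real.exp (∑ jj ∈ Sᶜ, ε jj.succ)) * Real.exp (ε 0)) 0))
                  = s * δ 0 * (∏ jj : Fin k, (1 + Real.exp (ε jj.succ)))
                    + (1 - δ 0) / (1 + Real.exp (ε 0)) *
                      ∑ S : Finset (Fin k),
                        (max ((s * Real.exp (∑ jj ∈ S, ε jj.succ)) * Real.exp (ε 0)
                            - t * Real.exp (∑ jj ∈ Sᶜ, ε jj.succ)) 0
                         + max (s * Real.exp (∑ jj ∈ S, ε jj.succ)
                            - (t * Real.exp (∑ jj ∈ Sᶜ, ε jj.succ)) * Real.exp (ε 0)) 0) := by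
                rw [Finset.sum_add_distrib, ← Finset.mul_sum]
                congr 1
                calc ∑ S : Finset (Fin k), (s * Real.exp (∑ jj ∈ S, ε jj.succ)) * δ 0
                    = ∑ S : Finset (Fin k), Real.exp (∑ jj ∈ S, ε jj.succ) * (s * δ 0) :=
                      Finset.sum_congr rfl fun S _ => by ring
                  _ = (∑ S : Finset (Fin k), Real.exp (∑ jj ∈ S, ε jj.succ)) * (s * δ 0) :=
                      (Finset.sum_mul _ _ _).symm
                  _ = s * δ 0 * (∏ jj : Fin k, (1 + Real.exp (ε jj.succ))) := by
                      rw [sum_exp_subsets k (fun jj => ε jj.succ)]; ring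
              have hcomm : ∑ S : Finset (Fin k),
                    (max (s * Real.exp (∑ jj ∈ S, ε jj.succ)
                        - (t * Real.exp (∑ jj ∈ Sᶜ, ε jj.succ)) * Real.exp (ε 0)) 0
                     + max ((s * Real.exp (∑ jj ∈ S, ε jj.succ)) * Real.exp (ε 0)
                        - t * Real.exp (∑ jj ∈ Sᶜ, ε jj.succ)) 0)
                  = ∑ S : Finset (Fin k),
                    (max ((s * Real.exp (∑ jj ∈ S, ε jj.succ)) * Real.exp (ε 0)
                        - t * Real.exp (∑ jj ∈ Sᶜ, ε jj.succ)) 0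
                     + max (s * Real.exp (∑ jj ∈ S, ε jj.succ)
                        - (t * Real.exp (∑ jj ∈ Sᶜ, ε jj.succ)) * Real.exp (ε 0)) 0) :=
                Finset.sum_congr rfl fun S _ => add_comm _ _
              rw [hsum1, hbig, hcomm,
                show (∏ i : Fin (k+1), (1 - δ i))
                    = (1 - δ 0) * ∏ jj : Fin k, (1 - δ jj.succ) from Fin.prod_univ_succ _,
                show (∏ i : Fin (k+1), (1 + Real.exp (ε i)))
                    = (1 + Real.exp (ε 0)) * ∏ jj : Fin k, (1 + Real.exp (ε jj.succ)) from
                  Fin.prod_univ_succ _]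
              have hQ'ne : (∏ jj : Fin k, (1 + Real.exp (ε jj.succ))) ≠ 0 := ne_of_gt hQ'pos
              have hE0ne : (1 + Real.exp (ε 0)) ≠ 0 := ne_of_gt hE0pos
              field_simp
              ring

/-- Theorem 3.7 combined with the soundness direction of Theorem 1.4 of Murtagh–Vadhan:
if `(ε_g, δ_g)` satisfies the optimal composition inequality, then for any family of
adaptively chosen kernels `κ b i`—where `κ b i` may depend only on the outputs of
earlier rounds (coordinates `j < i`), is a PMF on `Y i` for each history, and whose
two branches `κ false i h` and `κ true i h` are `(ε_i, δ_i)`-indistinguishable for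
every history `h`—the views `V^b y = ∏ i, κ b i y (y i)` obtained by sequential
sampling are `(ε_g, δ_g)`-indistinguishable. -/
theorem adaptive_composition (k : ℕ) (hk : 0 < k) (ε δ : Fin k → ℝ)
    (hε : ∀ i, 0 ≤ ε i) (hδ : ∀ i, 0 ≤ δ i ∧ δ i < 1)
    (εg δg : ℝ) (hεg : 0 ≤ εg) (hδg : 0 ≤ δg ∧ δg < 1)
    (hineq : (1 / ∏ i, (1 + Real.exp (ε i))) *
        ∑ S : Finset (Fin k),
          max (Real.exp (∑ i ∈ S, ε i) - Real.exp εg * Real.exp (∑ i ∈ Sᶜ, ε i)) 0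
      ≤ 1 - (1 - δg) / ∏ i, (1 - δ i))
    (Y : Fin k → Type) [∀ i, Fintype (Y i)]
    (κ : Bool → ∀ i : Fin k, (∀ j, Y j) → Y i → ℝ)
    (hprefix : ∀ b i (h h' : ∀ j, Y j), (∀ j, j < i → h j = h' j) → κ b i h = κ b i h')
    (hker : ∀ b i h, IsPMF (κ b i h))
    (hind : ∀ i (h : ∀ j, Y j), Indist (ε i) (δ i) (κ false i h) (κ true i h)) :
    Indist εg δg (fun y : ∀ i, Y i => ∏ i, κ false i y (y i))
                 (fun y : ∀ i, Y i => ∏ i, κ true i y (y i)) := by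
  have hPdpos : (0:ℝ) < ∏ i, (1 - δ i) := by
    apply Finset.prod_pos
    intro i _
    linarith [(hδ i).2]
  have key : ∀ (κ' : Bool → ∀ i : Fin k, (∀ j, Y j) → Y i → ℝ),
      (∀ b i (h h' : ∀ j, Y j), (∀ j, j < i → h j = h' j) → κ' b i h = κ' b i h') →
      (∀ b i (h : ∀ j, Y j), IsPMF (κ' b i h)) →
      (∀ i (h : ∀ j, Y j), Indist (ε i) (δ i) (κ' false i h) (κ' true i h)) →
      ∑ y : ∀ i, Y i,
        max (∏ i, κ' false i y (y i) - Real.exp εg * ∏ i, κ' true i y (y i)) 0 ≤ δg := by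
    intro κ' hp hk hi
    have h := main_bound k ε δ hε hδ Y κ' hp hk hi 1 (Real.exp εg)
      zero_le_one (Real.exp_pos _).le
    simp only [one_mul] at h
    refine h.trans ?_
    have h2 : (∏ i, (1 - δ i)) / (∏ i, (1 + Real.exp (ε i))) *
        ∑ S : Finset (Fin k),
          max (Real.exp (∑ i ∈ S, ε i) - Real.exp εg * Real.exp (∑ i ∈ Sᶜ, ε i)) 0
        ≤ (∏ i, (1 - δ i)) * (1 - (1 - δg) / ∏ i, (1 - δ i)) := by
      have h3 := mul_le_mul_of_nonneg_left hineq hPdpos.le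
      calc (∏ i, (1 - δ i)) / (∏ i, (1 + Real.exp (ε i))) *
            ∑ S : Finset (Fin k),
              max (Real.exp (∑ i ∈ S, ε i) - Real.exp εg * Real.exp (∑ i ∈ Sᶜ, ε i)) 0
          = (∏ i, (1 - δ i)) * ((1 / ∏ i, (1 + Real.exp (ε i))) *
            ∑ S : Finset (Fin k),
              max (Real.exp (∑ i ∈ S, ε i) - Real.exp εg * Real.exp (∑ i ∈ Sᶜ, ε i)) 0) := by
            ring
        _ ≤ (∏ i, (1 - δ i)) * (1 - (1 - δg) / ∏ i, (1 - δ i)) := h3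
    have h4 : (∏ i, (1 - δ i)) * (1 - (1 - δg) / ∏ i, (1 - δ i))
        = (∏ i, (1 - δ i)) - (1 - δg) := by
      field_simp
    linarith
  have m0 := key κ hprefix hker hind
  have m1 : ∑ y : ∀ i, Y i,
      max (∏ i, κ true i y (y i) - Real.exp εg * ∏ i, κ false i y (y i)) 0 ≤ δg := by
    have := key (fun b => κ (!b)) (fun b => hprefix (!b)) (fun b => hker (!b))
      (fun i h S => ⟨(hind i h S).2, (hind i h S).1⟩)
    simpa using this
  intro S
  constructor
  · have hstep : ∑ y ∈ S, (∏ i, κ false i y (y i))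
        - Real.exp εg * ∑ y ∈ S, (∏ i, κ true i y (y i)) ≤ δg := by
      calc ∑ y ∈ S, (∏ i, κ false i y (y i))
            - Real.exp εg * ∑ y ∈ S, (∏ i, κ true i y (y i))
          = ∑ y ∈ S, ((∏ i, κ false i y (y i)) - Real.exp εg * ∏ i, κ true i y (y i)) := by
            rw [Finset.sum_sub_distrib, Finset.mul_sum]
        _ ≤ ∑ y ∈ S, max ((∏ i, κ false i y (y i)) - Real.exp εg * ∏ i, κ true i y (y i)) 0 :=
            Finset.sum_le_sum fun y _ => le_max_left _ _
        _ ≤ ∑ y : ∀ i, Y i,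
              max ((∏ i, κ false i y (y i)) - Real.exp εg * ∏ i, κ true i y (y i)) 0 :=
            Finset.sum_le_sum_of_subset_of_nonneg (Finset.subset_univ S)
              (fun y _ _ => le_max_right _ _)
        _ ≤ δg := m0
    linarith
  · have hstep : ∑ y ∈ S, (∏ i, κ true i y (y i))
        - Real.exp εg * ∑ y ∈ S, (∏ i, κ false i y (y i)) ≤ δg := by
      calc ∑ y ∈ S, (∏ i, κ true i y (y i))
            - Real.exp εg * ∑ y ∈ S, (∏ i, κ false i y (y i))
          = ∑ y ∈ S, ((∏ i, κ true i y (y i)) - Real.exp εg * ∏ i, κ false i y (y i)) := by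
            rw [Finset.sum_sub_distrib, Finset.mul_sum]
        _ ≤ ∑ y ∈ S, max ((∏ i, κ true i y (y i)) - Real.exp εg * ∏ i, κ false i y (y i)) 0 :=
            Finset.sum_le_sum fun y _ => le_max_left _ _
        _ ≤ ∑ y : ∀ i, Y i,
              max ((∏ i, κ true i y (y i)) - Real.exp εg * ∏ i, κ false i y (y i)) 0 :=
            Finset.sum_le_sum_of_subset_of_nonneg (Finset.subset_univ S)
              (fun y _ _ => le_max_right _ _)
        _ ≤ δg := m1
    linarith
end

section
/- For every ε ≥ 0 and δ ∈ [0,1), the probability mass functions M̃_{(ε,δ)}(0) and M̃_{(ε,δ)}(1) on {0,1,2,3} are (ε,δ)-indistinguishable. -/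
open Finset

set_option maxHeartbeats 1000000 in
/-- `M̃_{(ε,δ)}` is `(ε, δ)`-differentially private:
`M̃_{(ε,δ)}(0)` and `M̃_{(ε,δ)}(1)` are `(ε,δ)`-indistinguishable. -/
theorem Mtilde_indist (ε δ : ℝ) (hε : 0 ≤ ε) (hδ : 0 ≤ δ ∧ δ < 1) :
    Indist ε δ (Mtilde ε δ false) (Mtilde ε δ true) := by
  obtain ⟨hδ0, hδ1⟩ := hδ
  have hE : (1:ℝ) ≤ Real.exp ε := Real.one_le_exp hε
  have hE0 : (0:ℝ) < 1 + Real.exp ε := by positivity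
  have hb : 0 ≤ (1 - δ) / (1 + Real.exp ε) := div_nonneg (by linarith) hE0.le
  have ha : (1 - δ) * Real.exp ε / (1 + Real.exp ε)
      = Real.exp ε * ((1 - δ) / (1 + Real.exp ε)) := by ring
  have h1 : (1 - δ) / (1 + Real.exp ε)
      ≤ Real.exp ε * ((1 - δ) / (1 + Real.exp ε)) := le_mul_of_one_le_left hb hE
  have h2 : Real.exp ε * ((1 - δ) / (1 + Real.exp ε))
      ≤ Real.exp ε * (Real.exp ε * ((1 - δ) / (1 + Real.exp ε))) :=
    le_mul_of_one_le_left (le_trans hb h1) hE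
  have h3 : δ ≤ Real.exp ε * δ := le_mul_of_one_le_left hδ0 hE
  intro S
  have key : ∀ f : Fin 4 → ℝ, ∑ r ∈ S, f r = ∑ r ∈ Finset.univ, if r ∈ S then f r else 0 := by
    intro f
    rw [Finset.sum_ite_mem, Finset.univ_inter]
  rw [key, key]
  simp only [Mtilde, Fin.sum_univ_four, ha, Matrix.cons_val_zero, Matrix.cons_val_one,
    Matrix.head_cons, Matrix.cons_val_two, Matrix.tail_cons, Matrix.cons_val_three,
    Matrix.head_fin_const]
  by_cases h0 : (0 : Fin 4) ∈ S <;> by_cases hm1 : (1 : Fin 4) ∈ S <;>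
    by_cases hm2 : (2 : Fin 4) ∈ S <;> by_cases hm3 : (3 : Fin 4) ∈ S <;>
    simp only [h0, hm1, hm2, hm3, if_true, if_false] <;>
    constructor <;>
    nlinarith [h1, h2, h3, hb, hδ0]
end

section
/- Let k be a positive integer, ε₁,…,ε_k ≥ 0 and c₁,…,c_k ≥ 0 real, δ₁,…,δ_k, δ_g ∈ [0,1), ε_g ≥ 0, and let c = Σ_{i=1}^k c_i. If (1/∏_{i=1}^k (1+exp(ε_i))) · Σ_{S ⊆ {1,…,k}} max(exp(Σ_{i∈S} ε_i) − exp(ε_g)·exp(Σ_{i∉S} ε_i), 0) ≤ 1 − (1−exp(−c/2)·δ_g)/∏_{i=1}^k (1−δ_i), then (1/∏_{i=1}^k (1+exp(ε_i+c_i))) · Σ_{S ⊆ {1,…,k}} max(exp(Σ_{i∈S} (ε_i+c_i)) − exp(ε_g+c)·exp(Σ_{i∉S} (ε_i+c_i)), 0) ≤ 1 − (1−δ_g)/∏_{i=1}^k (1−δ_i). -/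
/-!
Rounding each `ε i` up to `ε i + c i`, and `εg` up to `εg + c` with `c = ∑ c i`, multiplies
every term of the hockey-stick sum by at most `exp c`, while the normalising product
`∏ (1 + exp (ε i))` grows by at least `exp (c / 2)`, since
`1 + exp (ε + cᵢ) ≥ exp (cᵢ / 2) * (1 + exp ε)`. So the left-hand side grows by at most
`exp (c / 2)`, and because `∏ (1 - δ i) ≤ 1` this factor is paid for by having replaced `δg`
with `exp (-c / 2) * δg` in the hypothesis.
-/

open Finset Real

namespace OptComp

variable {ι : Type*} [Fintype ι]

/-- With `u = exp (a / 2) ≥ 1` and `v = exp e ≥ 1` this is `(u - 1) * (u * v - 1) ≥ 0`. -/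
lemma exp_half_mul_one_add_exp_le {a e : ℝ} (ha : 0 ≤ a) (he : 0 ≤ e) :
    exp (a / 2) * (1 + exp e) ≤ 1 + exp (e + a) := by
  have hu : 1 ≤ exp (a / 2) := one_le_exp (by linarith)
  have hv : 1 ≤ exp e := one_le_exp he
  have hsq : exp (e + a) = exp e * (exp (a / 2) * exp (a / 2)) := by
    rw [← exp_add, ← exp_add]; ring_nf
  rw [hsq]
  nlinarith [mul_nonneg (sub_nonneg.mpr hu) (sub_nonneg.mpr (one_le_mul_of_one_le_of_one_le hu hv))]

lemma exp_half_sum_mul_prod_le (ε c : ι → ℝ) (hε : ∀ i, 0 ≤ ε i) (hc : ∀ i, 0 ≤ c i) :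
    exp ((∑ i, c i) / 2) * ∏ i, (1 + exp (ε i)) ≤ ∏ i, (1 + exp (ε i + c i)) := by
  rw [sum_div, exp_sum, ← prod_mul_distrib]
  exact prod_le_prod (fun i _ => by positivity)
    fun i _ => exp_half_mul_one_add_exp_le (hc i) (hε i)

variable [DecidableEq ι]

noncomputable def hockeyStickSum (ε : ι → ℝ) (εg : ℝ) : ℝ :=
  ∑ S : Finset ι, max (exp (∑ i ∈ S, ε i) - exp εg * exp (∑ i ∈ Sᶜ, ε i)) 0

/-- The left-hand side of the optimal composition criterion (Theorem 1.4): the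
`exp εg`-hockey-stick divergence between the product distributions of the randomized
response mechanisms with parameters `ε i`. -/
noncomputable def hockeyStick (ε : ι → ℝ) (εg : ℝ) : ℝ :=
  (1 / ∏ i, (1 + exp (ε i))) * hockeyStickSum ε εg

lemma hockeyStickSum_nonneg (ε : ι → ℝ) (εg : ℝ) : 0 ≤ hockeyStickSum ε εg :=
  sum_nonneg fun _ _ => le_max_right _ _

lemma max_exp_sub_shift_le (x y g a : ℝ) {b : ℝ} (hb : 0 ≤ b) :
    max (exp (x + a) - exp (g + (a + b)) * exp (y + b)) 0
      ≤ exp (a + b) * max (exp x - exp g * exp y) 0 := by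
  refine max_le ?_ (by positivity)
  have hx : exp (x + a) ≤ exp (a + b) * exp x := by
    rw [← exp_add]; exact exp_le_exp.mpr (by linarith)
  have hy : exp (a + b) * (exp g * exp y) ≤ exp (g + (a + b)) * exp (y + b) := by
    rw [exp_add g, exp_add y]
    have : exp y ≤ exp y * exp b := le_mul_of_one_le_right (exp_pos y).le (one_le_exp hb)
    calc exp (a + b) * (exp g * exp y) = exp g * exp (a + b) * exp y := by ring
      _ ≤ exp g * exp (a + b) * (exp y * exp b) := by gcongr
  calc exp (x + a) - exp (g + (a + b)) * exp (y + b)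
      ≤ exp (a + b) * (exp x - exp g * exp y) := by linarith
    _ ≤ exp (a + b) * max (exp x - exp g * exp y) 0 := by gcongr; exact le_max_left _ _

lemma hockeyStickSum_add_le (ε c : ι → ℝ) (hc : ∀ i, 0 ≤ c i) (εg : ℝ) :
    hockeyStickSum (fun i => ε i + c i) (εg + ∑ i, c i)
      ≤ exp (∑ i, c i) * hockeyStickSum ε εg := by
  rw [hockeyStickSum, hockeyStickSum, mul_sum]
  refine sum_le_sum fun S _ => ?_
  rw [sum_add_distrib, sum_add_distrib, ← sum_add_sum_compl S c]
  exact max_exp_sub_shift_le _ _ _ _ (sum_nonneg fun i _ => hc i)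

lemma hockeyStick_add_le (ε c : ι → ℝ) (hε : ∀ i, 0 ≤ ε i) (hc : ∀ i, 0 ≤ c i) (εg : ℝ) :
    hockeyStick (fun i => ε i + c i) (εg + ∑ i, c i)
      ≤ exp ((∑ i, c i) / 2) * hockeyStick ε εg := by
  set C := ∑ i, c i
  have hden : 1 / ∏ i, (1 + exp (ε i + c i)) ≤ exp (-(C / 2)) * (1 / ∏ i, (1 + exp (ε i))) := by
    rw [exp_neg, ← one_div, div_mul_div_comm, one_mul]
    exact one_div_le_one_div_of_le (by positivity) (exp_half_sum_mul_prod_le ε c hε hc)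
  calc hockeyStick (fun i => ε i + c i) (εg + C)
      ≤ exp (-(C / 2)) * (1 / ∏ i, (1 + exp (ε i))) * (exp C * hockeyStickSum ε εg) :=
        mul_le_mul hden (hockeyStickSum_add_le ε c hc εg) (hockeyStickSum_nonneg _ _)
          (by positivity)
    _ = exp (-(C / 2) + C) * hockeyStick ε εg := by rw [hockeyStick, exp_add]; ring
    _ = exp (C / 2) * hockeyStick ε εg := by ring_nf

lemma mul_one_sub_div_le {t δ P : ℝ} (ht : 1 ≤ t) (hP : 0 < P) (hP1 : P ≤ 1) :
    t * (1 - (1 - t⁻¹ * δ) / P) ≤ 1 - (1 - δ) / P := by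
  have hP1' : 1 ≤ 1 / P := by rw [le_div_iff₀ hP]; linarith
  have hdiff : 1 - (1 - δ) / P - t * (1 - (1 - t⁻¹ * δ) / P) = (t - 1) * (1 / P - 1) := by
    field_simp
    ring
  nlinarith [mul_nonneg (sub_nonneg.mpr ht) (sub_nonneg.mpr hP1')]

end OptComp

open OptComp in
theorem optComp_rounding_general (k : ℕ) (ε c δ : Fin k → ℝ)
    (hε : ∀ i, 0 ≤ ε i) (hc : ∀ i, 0 ≤ c i) (hδ : ∀ i, 0 ≤ δ i ∧ δ i < 1)
    (εg δg : ℝ)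
    (hineq : (1 / ∏ i, (1 + Real.exp (ε i))) *
        ∑ S : Finset (Fin k),
          max (Real.exp (∑ i ∈ S, ε i) - Real.exp εg * Real.exp (∑ i ∈ Sᶜ, ε i)) 0
      ≤ 1 - (1 - Real.exp (-(∑ i, c i) / 2) * δg) / ∏ i, (1 - δ i)) :
    (1 / ∏ i, (1 + Real.exp (ε i + c i))) *
        ∑ S : Finset (Fin k),
          max (Real.exp (∑ i ∈ S, (ε i + c i))
            - Real.exp (εg + ∑ i, c i) * Real.exp (∑ i ∈ Sᶜ, (ε i + c i))) 0
      ≤ 1 - (1 - δg) / ∏ i, (1 - δ i) := by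
  have hP0 : 0 < ∏ i, (1 - δ i) := prod_pos fun i _ => by linarith [(hδ i).2]
  have hP1 : ∏ i, (1 - δ i) ≤ 1 :=
    prod_le_one (fun i _ => by linarith [(hδ i).2]) fun i _ => by linarith [(hδ i).1]
  rw [neg_div, exp_neg] at hineq
  calc hockeyStick (fun i => ε i + c i) (εg + ∑ i, c i)
      ≤ exp ((∑ i, c i) / 2) * hockeyStick ε εg := hockeyStick_add_le ε c hε hc εg
    _ ≤ exp ((∑ i, c i) / 2) * (1 - (1 - (exp ((∑ i, c i) / 2))⁻¹ * δg) / ∏ i, (1 - δ i)) :=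
        mul_le_mul_of_nonneg_left hineq (exp_pos _).le
    _ ≤ 1 - (1 - δg) / ∏ i, (1 - δ i) :=
        mul_one_sub_div_le (one_le_exp (div_nonneg (sum_nonneg fun i _ => hc i) zero_le_two))
          hP0 hP1

/-- The analytic content of Lemma 5.3 of Murtagh–Vadhan: if `(ε_g, δ_g·exp(−c/2))`
satisfies the optimal composition inequality for the parameters `(ε_i, δ_i)`, then
`(ε_g + c, δ_g)` satisfies it for the rounded-up parameters `(ε_i + c_i, δ_i)`,
where `c = Σ c_i`. -/
theorem optComp_rounding (k : ℕ) (hk : 0 < k) (ε c δ : Fin k → ℝ)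
    (hε : ∀ i, 0 ≤ ε i) (hc : ∀ i, 0 ≤ c i) (hδ : ∀ i, 0 ≤ δ i ∧ δ i < 1)
    (εg δg : ℝ) (hεg : 0 ≤ εg) (hδg : 0 ≤ δg ∧ δg < 1)
    (hineq : (1 / ∏ i, (1 + Real.exp (ε i))) *
        ∑ S : Finset (Fin k),
          max (Real.exp (∑ i ∈ S, ε i) - Real.exp εg * Real.exp (∑ i ∈ Sᶜ, ε i)) 0
      ≤ 1 - (1 - Real.exp (-(∑ i, c i) / 2) * δg) / ∏ i, (1 - δ i)) :
    (1 / ∏ i, (1 + Real.exp (ε i + c i))) *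
        ∑ S : Finset (Fin k),
          max (Real.exp (∑ i ∈ S, (ε i + c i))
            - Real.exp (εg + ∑ i, c i) * Real.exp (∑ i ∈ Sᶜ, (ε i + c i))) 0
      ≤ 1 - (1 - δg) / ∏ i, (1 - δ i) :=
  optComp_rounding_general k ε c δ hε hc hδ εg δg hineq
end

section
/- Let k be a positive integer, ε₁,…,ε_k ≥ 0 and c₁,…,c_k ≥ 0 real, ε_g ≥ 0, and let c = Σ_{i=1}^k c_i. Then Σ_{S ⊆ {1,…,k}} max(exp(Σ_{i∈S} (ε_i+c_i)) − exp(ε_g+c)·exp(Σ_{i∉S} (ε_i+c_i)), 0) ≤ exp(c) · Σ_{S ⊆ {1,…,k}} max(exp(Σ_{i∈S} ε_i) − exp(ε_g)·exp(Σ_{i∉S} ε_i), 0). -/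
open Finset

lemma optComp_term_le (a b as bs εg : ℝ) (has : 0 ≤ as) (hbs : 0 ≤ bs) :
    max (Real.exp (a + as) - Real.exp (εg + (as + bs)) * Real.exp (b + bs)) 0
      ≤ Real.exp (as + bs) * max (Real.exp a - Real.exp εg * Real.exp b) 0 := by
  have hbs1 : 1 ≤ Real.exp bs := Real.one_le_exp hbs
  have has1 : 1 ≤ Real.exp as := Real.one_le_exp has
  rcases le_or_gt (Real.exp a) (Real.exp εg * Real.exp b) with h | h
  · have hL : Real.exp (a + as) - Real.exp (εg + (as + bs)) * Real.exp (b + bs) ≤ 0 := by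
      simp only [Real.exp_add]
      nlinarith [mul_le_mul_of_nonneg_right h (Real.exp_pos as).le,
        Real.exp_pos εg, Real.exp_pos b, Real.exp_pos as, Real.exp_pos bs,
        mul_nonneg (mul_nonneg (Real.exp_pos εg).le (Real.exp_pos b).le)
          (mul_nonneg (Real.exp_pos as).le (sub_nonneg.2 hbs1))]
    rw [max_eq_right hL]
    positivity
  · rw [max_eq_left (by linarith : (0:ℝ) ≤ Real.exp a - Real.exp εg * Real.exp b)]
    apply max_le _ (by nlinarith [Real.exp_pos (as+bs)])
    simp only [Real.exp_add]
    nlinarith [mul_nonneg (mul_nonneg (Real.exp_pos as).le (Real.exp_pos a).le)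
        (sub_nonneg.2 hbs1),
      mul_nonneg (mul_nonneg (mul_nonneg (Real.exp_pos as).le (Real.exp_pos bs).le)
        (mul_nonneg (Real.exp_pos εg).le (Real.exp_pos b).le)) (sub_nonneg.2 hbs1)]

/-- The term-by-term inequality at the heart of Lemma 5.3 of Murtagh–Vadhan:
increasing each `ε_i` to `ε_i + c_i` and `ε_g` to `ε_g + c` (with `c = Σ c_i`)
increases the optimal-composition sum by a factor of at most `exp c`. -/
theorem optComp_sum_le (k : ℕ) (hk : 0 < k) (ε c : Fin k → ℝ)
    (hε : ∀ i, 0 ≤ ε i) (hc : ∀ i, 0 ≤ c i) (εg : ℝ) (hεg : 0 ≤ εg) :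
    ∑ S : Finset (Fin k),
        max (Real.exp (∑ i ∈ S, (ε i + c i))
          - Real.exp (εg + ∑ i, c i) * Real.exp (∑ i ∈ Sᶜ, (ε i + c i))) 0
      ≤ Real.exp (∑ i, c i) *
        ∑ S : Finset (Fin k),
          max (Real.exp (∑ i ∈ S, ε i) - Real.exp εg * Real.exp (∑ i ∈ Sᶜ, ε i)) 0 := by
  rw [Finset.mul_sum]
  apply Finset.sum_le_sum
  intro S _
  have hsplit : ∑ i, c i = (∑ i ∈ S, c i) + ∑ i ∈ Sᶜ, c i :=
    (Finset.sum_add_sum_compl S c).symm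
  rw [hsplit, Finset.sum_add_distrib, Finset.sum_add_distrib]
  exact optComp_term_le _ _ _ _ _ (Finset.sum_nonneg fun i _ => hc i)
    (Finset.sum_nonneg fun i _ => hc i)
end

section
/- Let k be a positive integer, ε₀ > 0 a real number, a₁,…,a_k and a* positive integers, and set ε_i = a_i·ε₀ for each i and ε* = a*·ε₀. Let B = ⌊(Σ_{i=1}^k a_i − a*)/2⌋ (an integer, possibly negative). Then Σ_{S ⊆ {1,…,k}} max(exp(Σ_{i∈S} ε_i) − exp(ε*)·exp(Σ_{i∉S} ε_i), 0) = Σ_{T ⊆ {1,…,k} : Σ_{i∈T} a_i ≤ B} ( exp(Σ_{i=1}^k ε_i)·exp(−Σ_{i∈T} ε_i) − exp(ε*)·exp(Σ_{i∈T} ε_i) ). -/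
/-!
Write `s_T = Σ_{i∈T} a_i` and `A = Σ_i a_i`. After reindexing the left side by `T = Sᶜ`, its
summand is `max (exp (ε₀ (A - s_T)) - exp (ε₀ (a* + s_T))) 0`, whose first argument is nonnegative exactly when
`a* + s_T ≤ A - s_T`, i.e. when the integer `s_T` is at most `⌊(A - a*)/2⌋ = B`. So the `max`
may be dropped on the knapsack-feasible sets and the other summands vanish.
-/

open Finset

lemma Finset.sum_max_sub_zero_eq_sum_filter {ι : Type*} (s : Finset ι) (f g : ι → ℝ) :
    ∑ i ∈ s, max (f i - g i) 0 = ∑ i ∈ s with g i ≤ f i, (f i - g i) := by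
  rw [sum_filter]
  refine sum_congr rfl fun i _ => ?_
  split_ifs with h
  · exact max_eq_left (sub_nonneg.mpr h)
  · exact max_eq_right (by linarith [not_le.mp h])

lemma Fintype.sum_finset_compl {α M : Type*} [Fintype α] [DecidableEq α] [AddCommMonoid M]
    (f : Finset α → M) : ∑ S, f Sᶜ = ∑ S, f S :=
  Fintype.sum_bijective compl compl_involutive.bijective _ _ fun _ => rfl

lemma Real.exp_sum_compl {ι : Type*} [Fintype ι] [DecidableEq ι] (ε : ι → ℝ) (T : Finset ι) :
    Real.exp (∑ i ∈ Tᶜ, ε i) = Real.exp (∑ i, ε i) * Real.exp (-∑ i ∈ T, ε i) := by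
  rw [← Real.exp_add, ← sum_add_sum_compl T ε]
  ring_nf

lemma Int.le_floor_div_two_iff (z : ℤ) (x : ℝ) : z ≤ ⌊x / 2⌋ ↔ 2 * (z : ℝ) ≤ x := by
  rw [Int.le_floor, le_div_iff₀ two_pos, mul_comm]

theorem optComp_knapsack_general (k : ℕ) (ε0 : ℝ) (hε0 : 0 < ε0)
    (a : Fin k → ℕ) (astar : ℕ)
    (ε : Fin k → ℝ) (hεdef : ∀ i, ε i = (a i : ℝ) * ε0)
    (εstar : ℝ) (hεstar : εstar = (astar : ℝ) * ε0)
    (B : ℤ) (hB : B = ⌊((∑ i, (a i : ℝ)) - (astar : ℝ)) / 2⌋) :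
    ∑ S : Finset (Fin k),
        max (Real.exp (∑ i ∈ S, ε i) - Real.exp εstar * Real.exp (∑ i ∈ Sᶜ, ε i)) 0
      = ∑ T ∈ Finset.univ.filter (fun T : Finset (Fin k) => (∑ i ∈ T, (a i : ℤ)) ≤ B),
          (Real.exp (∑ i, ε i) * Real.exp (-∑ i ∈ T, ε i)
            - Real.exp εstar * Real.exp (∑ i ∈ T, ε i)) := by
  have hsum : ∀ T : Finset (Fin k), ∑ i ∈ T, ε i = (∑ i ∈ T, (a i : ℝ)) * ε0 := fun T => by
    rw [sum_mul]
    exact sum_congr rfl fun i _ => hεdef i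
  have feasible_iff : ∀ T : Finset (Fin k), (∑ i ∈ T, (a i : ℤ)) ≤ B ↔
      Real.exp εstar * Real.exp (∑ i ∈ T, ε i)
        ≤ Real.exp (∑ i, ε i) * Real.exp (-∑ i ∈ T, ε i) := fun T => by
    rw [← Real.exp_add, ← Real.exp_add, Real.exp_le_exp, hB, Int.le_floor_div_two_iff,
      hsum, hsum, hεstar, ← mul_le_mul_iff_of_pos_right hε0]
    push_cast
    constructor <;> intro h <;> linarith
  rw [← Fintype.sum_finset_compl]
  simp only [compl_compl, Real.exp_sum_compl]
  rw [sum_max_sub_zero_eq_sum_filter]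
  exact sum_congr (filter_congr fun T _ => (feasible_iff T).symm) fun _ _ => rfl

/-- The knapsack rewriting from the proof of Lemma 5.2 of Murtagh–Vadhan: when every
`ε_i = a_i·ε₀` and `ε* = a*·ε₀` are integer multiples of `ε₀ > 0`, the sum in the optimal
composition formula equals a sum over subsets `T` satisfying the integer knapsack
constraint `Σ_{i∈T} a_i ≤ B` with `B = ⌊(Σ a_i − a*)/2⌋`. -/
theorem optComp_knapsack (k : ℕ) (hk : 0 < k) (ε0 : ℝ) (hε0 : 0 < ε0)
    (a : Fin k → ℕ) (ha : ∀ i, 0 < a i) (astar : ℕ) (hastar : 0 < astar)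
    (ε : Fin k → ℝ) (hεdef : ∀ i, ε i = (a i : ℝ) * ε0)
    (εstar : ℝ) (hεstar : εstar = (astar : ℝ) * ε0)
    (B : ℤ) (hB : B = ⌊((∑ i, (a i : ℝ)) - (astar : ℝ)) / 2⌋) :
    ∑ S : Finset (Fin k),
        max (Real.exp (∑ i ∈ S, ε i) - Real.exp εstar * Real.exp (∑ i ∈ Sᶜ, ε i)) 0
      = ∑ T ∈ Finset.univ.filter (fun T : Finset (Fin k) => (∑ i ∈ T, (a i : ℤ)) ≤ B),
          (Real.exp (∑ i, ε i) * Real.exp (-∑ i ∈ T, ε i)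
            - Real.exp εstar * Real.exp (∑ i ∈ T, ε i)) :=
  optComp_knapsack_general k ε0 hε0 a astar ε hεdef εstar hεstar B hB
end

section
/- Let w > 0 and T > 0 be real numbers and set r = (T + √(T² + 4w))² / (4w). Then for every real v > 0: v − r·w/v ≥ 0 if and only if v − w/v ≥ T. -/
/-- The choice of threshold `r` in the proof that SUM-PARTITION is #P-hard
(Lemma 4.9 of Murtagh–Vadhan): with `r = (T + √(T² + 4w))²/(4w)`, for every `v > 0`
we have `v − r·w/v ≥ 0` iff `v − w/v ≥ T`. -/
theorem threshold_equiv (w T : ℝ) (hw : 0 < w) (hT : 0 < T)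
    (r : ℝ) (hr : r = (T + Real.sqrt (T ^ 2 + 4 * w)) ^ 2 / (4 * w)) :
    ∀ v : ℝ, 0 < v → (v - r * w / v ≥ 0 ↔ v - w / v ≥ T) := by
  set s := Real.sqrt (T ^ 2 + 4 * w) with hs
  have hpos : (0:ℝ) ≤ T ^ 2 + 4 * w := by nlinarith
  have hs2 : s ^ 2 = T ^ 2 + 4 * w := Real.sq_sqrt hpos
  have hs0 : 0 ≤ s := Real.sqrt_nonneg _
  have hTs : T < s := by nlinarith
  have hrw : r * w = (T + s) ^ 2 / 4 := by
    rw [hr]; field_simp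
  intro v hv
  constructor
  · intro h
    have h1 : r * w ≤ v * v := (div_le_iff₀ hv).mp (by linarith)
    have hv2 : (T + s) / 2 ≤ v := by nlinarith
    have h2 : w ≤ (v - T) * v := by
      nlinarith [mul_nonneg (sub_nonneg.mpr hv2) (show (0:ℝ) ≤ v - (T - s)/2 by linarith)]
    have h3 : w / v ≤ v - T := (div_le_iff₀ hv).mpr h2
    linarith
  · intro h
    have h3 : w / v ≤ v - T := by linarith
    have h2 : w ≤ (v - T) * v := (div_le_iff₀ hv).mp h3
    have hv2 : (T + s) / 2 ≤ v := by nlinarith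
    have h1 : r * w ≤ v * v := by nlinarith
    have : r * w / v ≤ v := (div_le_iff₀ hv).mpr h1
    linarith
end

section
/- Let k be a positive integer and w₁,…,w_k > 0 real numbers. Set w = ∏_{i=1}^k w_i and T = √w·(w − 1). Then for every subset P ⊆ {1,…,k}: w·∏_{i∈P} w_i − ∏_{i∈{1,…,k}∖P} w_i = T if and only if ∏_{i∈P} w_i = ∏_{i∈{1,…,k}∖P} w_i. -/
/-!
Write `a = ∏_{i∈P} w_i`, `b = ∏_{i∉P} w_i`, so that `w = ab`, and `s = √(ab)`. Since `s² = ab`,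
`a · (ab·a − b − s(ab − 1)) = (a − s)(a²b + s)`, and the second factor is positive. So the gap
equals `T` exactly when `a = s`, i.e. when `a² = ab`, i.e. when `a = b`.
-/

open Finset

theorem mul_mul_sub_sub_mul_eq_of_mul_self_eq {R : Type*} [CommRing R] {a b s : R}
    (hs : s * s = a * b) :
    a * (a * b * a - b - s * (a * b - 1)) = (a - s) * (a ^ 2 * b + s) := by
  linear_combination hs

theorem Real.eq_sqrt_mul_iff {a b : ℝ} (ha : 0 < a) (hb : 0 ≤ b) : a = √(a * b) ↔ a = b := by
  rw [eq_comm, Real.sqrt_eq_iff_mul_self_eq (mul_nonneg ha.le hb) ha.le, mul_left_cancel_iff_of_pos ha,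
    eq_comm]

theorem Real.mul_mul_sub_eq_sqrt_mul_mul_sub_one_iff {a b : ℝ} (ha : 0 < a) (hb : 0 < b) :
    a * b * a - b = √(a * b) * (a * b - 1) ↔ a = b := by
  have hs : √(a * b) * √(a * b) = a * b := Real.mul_self_sqrt (mul_pos ha hb).le
  have hpos : 0 < a ^ 2 * b + √(a * b) := by positivity
  rw [← sub_eq_zero, ← mul_eq_zero_iff_left ha.ne', mul_mul_sub_sub_mul_eq_of_mul_self_eq hs,
    mul_eq_zero_iff_right hpos.ne', sub_eq_zero, Real.eq_sqrt_mul_iff ha hb.le]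

theorem partition_gap_iff_general (k : ℕ) (w : Fin k → ℝ) (hw : ∀ i, 0 < w i) :
    ∀ P : Finset (Fin k),
      ((∏ i, w i) * ∏ i ∈ P, w i - ∏ i ∈ Pᶜ, w i
          = Real.sqrt (∏ i, w i) * ((∏ i, w i) - 1)
        ↔ ∏ i ∈ P, w i = ∏ i ∈ Pᶜ, w i) := by
  intro P
  rw [← prod_mul_prod_compl P w]
  exact Real.mul_mul_sub_eq_sqrt_mul_mul_sub_one_iff (prod_pos fun i _ => hw i)
    (prod_pos fun i _ => hw i)

/-- Case 1 of the reduction from #PARTITION to #T-PARTITION (Lemma 4.8 of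
Murtagh–Vadhan): with `w = ∏ w_i` and `T = √w·(w − 1)`, for every subset `P`
we have `w·∏_{i∈P} w_i − ∏_{i∉P} w_i = T` iff `∏_{i∈P} w_i = ∏_{i∉P} w_i`. -/
theorem partition_gap_iff (k : ℕ) (hk : 0 < k) (w : Fin k → ℝ) (hw : ∀ i, 0 < w i) :
    ∀ P : Finset (Fin k),
      ((∏ i, w i) * ∏ i ∈ P, w i - ∏ i ∈ Pᶜ, w i
          = Real.sqrt (∏ i, w i) * ((∏ i, w i) - 1)
        ↔ ∏ i ∈ P, w i = ∏ i ∈ Pᶜ, w i) :=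
  partition_gap_iff_general k w hw
end

section
/- Let D, a, b, and z₁,…,z_k be positive integers and let S ⊆ {1,…,k}. Set x = ∏_{i∈S} z_i and y = (a/b)·∏_{i∉S} z_i (as positive real numbers). If x ≠ y, then |x^{1/D} − y^{1/D}| ≥ 1 / (b · D · max(x,y)^{(D−1)/D}). -/
/-!
Since `b·x` and `b·y` are distinct integers, `|x - y| ≥ 1/b`. Writing `x - y = u^D - v^D` with
`u = x^{1/D}`, `v = y^{1/D}`, both at most `max(x,y)^{1/D}`, the factorisation of `u^D - v^D`
gives `|x - y| ≤ D · max(x,y)^{(D-1)/D} · |u - v|`.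
-/

theorem one_div_le_abs_sub_of_mul_eq_intCast {b x y : ℝ} {m n : ℤ} (hb : 0 < b)
    (hx : b * x = m) (hy : b * y = n) (hne : x ≠ y) : 1 / b ≤ |x - y| := by
  have hmn : m ≠ n := fun h => hne (mul_left_cancel₀ hb.ne' (by rw [hx, hy, h]))
  have h1 : (1 : ℝ) ≤ |b * x - b * y| := by
    rw [hx, hy]; exact_mod_cast Int.one_le_abs (sub_ne_zero.mpr hmn)
  rw [← mul_sub, abs_mul, abs_of_pos hb] at h1
  rw [div_le_iff₀ hb]
  linarith

theorem abs_sub_le_mul_abs_rpow_one_div_sub {x y : ℝ} (hx : 0 ≤ x) (hy : 0 ≤ y) {n : ℕ}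
    (hn : 0 < n) :
    |x - y| ≤ n * max x y ^ (((n : ℝ) - 1) / n) * |x ^ (1 / (n : ℝ)) - y ^ (1 / (n : ℝ))| := by
  have hroot_pow : ∀ {w : ℝ}, 0 ≤ w → (w ^ (1 / (n : ℝ))) ^ n = w := fun hw => by
    rw [one_div, Real.rpow_inv_natCast_pow hw hn.ne']
  have hmax : max |x ^ (1 / (n : ℝ))| |y ^ (1 / (n : ℝ))| = max x y ^ (1 / (n : ℝ)) := by
    rw [abs_of_nonneg (by positivity), abs_of_nonneg (by positivity),
      Real.rpow_max hx hy (by positivity)]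
  have hexp : (max x y ^ (1 / (n : ℝ))) ^ (n - 1) = max x y ^ (((n : ℝ) - 1) / n) := by
    rw [← Real.rpow_natCast, ← Real.rpow_mul (le_max_of_le_left hx), Nat.cast_sub hn,
      Nat.cast_one, one_div_mul_eq_div]
  calc |x - y| = |(x ^ (1 / (n : ℝ))) ^ n - (y ^ (1 / (n : ℝ))) ^ n| := by
        rw [hroot_pow hx, hroot_pow hy]
    _ ≤ _ := abs_pow_sub_pow_le ..
    _ = _ := by rw [hmax, hexp]; ring

theorem root_gap_lower_bound_general (D a b : ℕ) (hD : 0 < D) (hb : 0 < b)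
    (k : ℕ) (z : Fin k → ℕ) (S : Finset (Fin k))
    (x y : ℝ) (hx : x = ∏ i ∈ S, (z i : ℝ))
    (hy : y = ((a : ℝ) / (b : ℝ)) * ∏ i ∈ Sᶜ, (z i : ℝ))
    (hne : x ≠ y) :
    |x ^ (1 / (D : ℝ)) - y ^ (1 / (D : ℝ))|
      ≥ 1 / ((b : ℝ) * (D : ℝ) * max x y ^ (((D : ℝ) - 1) / (D : ℝ))) := by
  have hbR : (0 : ℝ) < b := by exact_mod_cast hb
  have hgap : 1 / (b : ℝ) ≤ |x - y| :=
    one_div_le_abs_sub_of_mul_eq_intCast (m := b * ∏ i ∈ S, z i) (n := a * ∏ i ∈ Sᶜ, z i) hbR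
      (by rw [hx]; push_cast; ring) (by rw [hy]; push_cast; field_simp) hne
  have hroot := abs_sub_le_mul_abs_rpow_one_div_sub (x := x) (y := y)
    (by rw [hx]; positivity) (by rw [hy]; positivity) hD
  have hscale : 0 < (D : ℝ) * max x y ^ (((D : ℝ) - 1) / D) := by
    have hprod_pos := (one_div_pos.2 hbR).trans_le (hgap.trans hroot)
    exact pos_of_mul_pos_left hprod_pos (abs_nonneg _)
  rw [ge_iff_le, mul_assoc, ← div_div, div_le_iff₀ hscale, mul_comm]
  exact hgap.trans hroot

/-- The precision bound from Section 4 of Murtagh–Vadhan: with `x = ∏_{i∈S} z_i` and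
`y = (a/b)·∏_{i∉S} z_i` (positive integers `z_i, a, b, D`), if `x ≠ y` then
`|x^{1/D} − y^{1/D}| ≥ 1/(b·D·max(x,y)^{(D−1)/D})`. -/
theorem root_gap_lower_bound (D a b : ℕ) (hD : 0 < D) (ha : 0 < a) (hb : 0 < b)
    (k : ℕ) (z : Fin k → ℕ) (hz : ∀ i, 0 < z i) (S : Finset (Fin k))
    (x y : ℝ) (hx : x = ∏ i ∈ S, (z i : ℝ))
    (hy : y = ((a : ℝ) / (b : ℝ)) * ∏ i ∈ Sᶜ, (z i : ℝ))
    (hne : x ≠ y) :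
    |x ^ (1 / (D : ℝ)) - y ^ (1 / (D : ℝ))|
      ≥ 1 / ((b : ℝ) * (D : ℝ) * max x y ^ (((D : ℝ) - 1) / (D : ℝ))) :=
  root_gap_lower_bound_general D a b hD hb k z S x y hx hy hne
end
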